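/- arXiv:1508.07668 — 9 statements merged into one kernel-verified Lean document; each statement's English description precedes it below -/
import Mathlib

section
/- Let B(x₁,x₂) = 8(log x₁ - x₂) on the domain Ω_δ = {(x₁,x₂) : log(x₁/δ) ≤ x₂ ≤ log x₁, x₁ > 0}. For any points x⁺, x⁻ ∈ Ω_δ whose midpoint x = (x⁺+x⁻)/2 also lies in Ω_δ, one has B(x) ≥ (B(x⁺)+B(x⁻))/2 + ((x₁⁺ - x₁⁻)/x₁)². -/
/-- The Bellman candidate for Buckley's inequality. -/
noncomputable def BuckleyB (x : ℝ × ℝ) : ℝ := 8 * (Real.log x.1 - x.2)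

/-- The Bellman domain `Ω_δ`. -/
def OmegaBuckley (δ : ℝ) : Set (ℝ × ℝ) :=
  {x | 0 < x.1 ∧ Real.log (x.1 / δ) ≤ x.2 ∧ x.2 ≤ Real.log x.1}

theorem buckley_main_inequality (δ : ℝ) (xp xm : ℝ × ℝ)
    (hxp : xp ∈ OmegaBuckley δ) (hxm : xm ∈ OmegaBuckley δ)
    (hmid : ((xp.1 + xm.1) / 2, (xp.2 + xm.2) / 2) ∈ OmegaBuckley δ) :
    BuckleyB ((xp.1 + xm.1) / 2, (xp.2 + xm.2) / 2) ≥
      (BuckleyB xp + BuckleyB xm) / 2 + ((xp.1 - xm.1) / ((xp.1 + xm.1) / 2)) ^ 2 := by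
  obtain ⟨ha, -, -⟩ := hxp
  obtain ⟨hb, -, -⟩ := hxm
  obtain ⟨hm, -, -⟩ := hmid
  set a := xp.1
  set b := xm.1
  have hm' : (0:ℝ) < (a + b) / 2 := hm
  have hpos : (0:ℝ) < a * b / ((a + b) / 2) ^ 2 := by positivity
  have key := Real.log_le_sub_one_of_pos hpos
  rw [Real.log_div (by positivity) (by positivity), Real.log_mul ha.ne' hb.ne',
    Real.log_pow] at key
  simp only [BuckleyB]
  have h2 : Real.log a + Real.log b - 2 * Real.log ((a + b) / 2)
      ≤ a * b / ((a + b) / 2) ^ 2 - 1 := by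
    linarith [key]
  have h3 : a * b / ((a + b) / 2) ^ 2 - 1 = -(((a - b) / ((a + b) / 2)) ^ 2) / 4 := by
    field_simp
    ring
  rw [h3] at h2
  nlinarith [h2]
end

section
/- Fix δ ≥ 1 and a point x = (x₁,x₂) with x₁ > 0 and log(x₁/δ) ≤ x₂ ≤ log x₁. Then there exists a nonnegative weight w ∈ L¹(J) on J = [0,1] with ⟨w⟩_I ≤ δ·exp(⟨log w⟩_I) for all subintervals I ⊂ J, such that ⟨w⟩_J = x₁ and ⟨log w⟩_J = x₂. -/
open MeasureTheory

/-- Average of `f` over the interval `[c,d]`. -/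
noncomputable def iavg (c d : ℝ) (f : ℝ → ℝ) : ℝ := (d - c)⁻¹ * ∫ t in c..d, f t


lemma step_ii (θ u v c d : ℝ) :
    IntervalIntegrable (fun t => if t < θ then u else v) volume c d := by
  have hm : Measurable (fun t : ℝ => if t < θ then u else v) :=
    Measurable.ite measurableSet_Iio measurable_const measurable_const
  apply intervalIntegrable_iff.mpr
  apply Measure.integrableOn_of_bounded measure_Ioc_lt_top.ne hm.aestronglyMeasurable (M := max |u| |v|)
  filter_upwards with t
  by_cases h : t < θ <;> simp [h, le_max_left, le_max_right]

lemma ae_ne (θ : ℝ) : ∀ᵐ t : ℝ, t ≠ θ := by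
  refine MeasureTheory.ae_iff.mpr ?_
  simp

lemma integral_step_left {θ u v c d : ℝ} (h : c ≤ d) (hd : d ≤ θ) :
    ∫ t in c..d, (if t < θ then u else v) = u * (d - c) := by
  rw [intervalIntegral.integral_congr_ae (g := fun _ => u), intervalIntegral.integral_const,
    smul_eq_mul, mul_comm]
  filter_upwards [ae_ne θ] with t ht hmem
  rw [Set.uIoc_of_le h] at hmem
  have : t < θ := lt_of_le_of_ne (hmem.2.trans hd) ht
  simp [this]

lemma integral_step_right {θ u v c d : ℝ} (h : c ≤ d) (hc : θ ≤ c) :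
    ∫ t in c..d, (if t < θ then u else v) = v * (d - c) := by
  rw [intervalIntegral.integral_congr_ae (g := fun _ => v), intervalIntegral.integral_const,
    smul_eq_mul, mul_comm]
  filter_upwards with t hmem
  rw [Set.uIoc_of_le h] at hmem
  have : ¬ (t < θ) := not_lt.mpr (hc.trans hmem.1.le)
  simp [this]

lemma integral_step (θ u v c d : ℝ) (h : c ≤ d) :
    ∫ t in c..d, (if t < θ then u else v)
      = u * (max c (min d θ) - c) + v * (d - max c (min d θ)) := by
  set m := max c (min d θ) with hm
  have hcm : c ≤ m := le_max_left _ _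
  have hmd : m ≤ d := max_le h (min_le_left _ _)
  rw [← intervalIntegral.integral_add_adjacent_intervals (step_ii θ u v c m) (step_ii θ u v m d)]
  have h1 : ∫ t in c..m, (if t < θ then u else v) = u * (m - c) := by
    rcases le_or_gt θ c with hθ | hθ
    · have : m = c := le_antisymm (max_le le_rfl ((min_le_right _ _).trans hθ)) hcm
      rw [this]; simp
    · exact integral_step_left hcm (max_le hθ.le (min_le_right _ _))
  have h2 : ∫ t in m..d, (if t < θ then u else v) = v * (d - m) := by
    rcases le_or_gt d θ with hθ | hθ
    · have : m = d := le_antisymm hmd (le_max_of_le_right (le_min le_rfl hθ))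
      rw [this]; simp
    · refine integral_step_right hmd ?_
      rw [hm, min_eq_right hθ.le]
      exact le_max_right _ _
  rw [h1, h2]

noncomputable def Nfun (s : ℝ) : ℝ :=
  (Real.exp s - 1) / s * Real.exp (s / (Real.exp s - 1) - 1)

lemma key_ineq {s L : ℝ} (hs : 0 < s) (hL : 0 ≤ L) :
    1 + L * (Real.exp s - 1) ≤ Nfun s * Real.exp (L * s) := by
  set E := Real.exp s with hE
  have hEs : s + 1 < E := Real.add_one_lt_exp (ne_of_gt hs)
  have hE1 : (0:ℝ) < E - 1 := by linarith
  have hB : (0:ℝ) < (E - 1)/s := div_pos hE1 hs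
  set x := 1 + L * (E - 1) with hx
  have hx0 : 0 < x := by nlinarith
  have h1 : x / ((E-1)/s) ≤ Real.exp (x / ((E-1)/s) - 1) := by
    have := Real.add_one_le_exp (x / ((E-1)/s) - 1)
    linarith
  have h2 : x ≤ (E-1)/s * Real.exp (x / ((E-1)/s) - 1) := by
    rw [div_le_iff₀ hB] at h1
    linarith [h1]
  have h3 : x / ((E-1)/s) - 1 = (s/(E-1) - 1) + L * s := by
    field_simp
    ring
  rw [h3, Real.exp_add] at h2
  calc x ≤ (E-1)/s * (Real.exp (s/(E-1) - 1) * Real.exp (L * s)) := h2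
    _ = Nfun s * Real.exp (L * s) := by rw [Nfun]; ring

lemma Nfun_le {s : ℝ} (hs : 0 < s) : Nfun s ≤ Real.exp s := by
  set E := Real.exp s with hE
  have hEs : s + 1 < E := Real.add_one_lt_exp (ne_of_gt hs)
  have hE1 : (0:ℝ) < E - 1 := by linarith
  have h1 : (E - 1)/s ≤ E := by
    rw [div_le_iff₀ hs]
    have hEpos : (0:ℝ) < E := Real.exp_pos s
    have hinv : 1 - s ≤ E⁻¹ := by
      have h := Real.add_one_le_exp (-s)
      rw [Real.exp_neg] at h
      linarith
    nlinarith [mul_le_mul_of_nonneg_right hinv hEpos.le, inv_mul_cancel₀ (ne_of_gt hEpos)]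
  have h2 : Real.exp (s/(E-1) - 1) ≤ 1 := by
    apply Real.exp_le_one_iff.mpr
    have : s / (E-1) ≤ 1 := by rw [div_le_one hE1]; linarith
    linarith
  calc Nfun s ≤ E * 1 := by
        apply mul_le_mul h1 h2 (Real.exp_pos _).le (Real.exp_pos s).le
    _ = E := mul_one E

lemma Nfun_ge {s : ℝ} (hs : 0 < s) : s / 16 ≤ Nfun s := by
  set E := Real.exp s with hE
  have hE1 : (0:ℝ) < E - 1 := by
    have := Real.add_one_lt_exp (ne_of_gt hs); linarith
  have hq : 1 + s/2 ≤ Real.exp (s/2) := by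
    have := Real.add_one_le_exp (s/2); linarith
  have hEq : (1 + s/2)^2 ≤ E := by
    have h2 : Real.exp (s/2) ^ 2 = E := by
      rw [sq, ← Real.exp_add, hE]; ring_nf
    calc (1+s/2)^2 ≤ Real.exp (s/2)^2 := by nlinarith [Real.exp_pos (s/2)]
      _ = E := h2
  have hEquad : s^2/4 ≤ E - 1 := by nlinarith
  have hexp : (1:ℝ)/4 ≤ Real.exp (s/(E-1) - 1) := by
    have h1 : Real.exp (-1 : ℝ) ≤ Real.exp (s/(E-1) - 1) := by
      apply Real.exp_le_exp.mpr
      have : 0 ≤ s/(E-1) := le_of_lt (div_pos hs hE1)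
      linarith
    have h2 : (1:ℝ)/4 ≤ Real.exp (-1:ℝ) := by
      have hmul : Real.exp (-1:ℝ) * Real.exp 1 = 1 := by
        rw [← Real.exp_add]; norm_num
      have he : Real.exp 1 ≤ 4 := by
        calc Real.exp 1 ≤ 2.7182818286 := Real.exp_one_lt_d9.le
          _ ≤ 4 := by norm_num
      nlinarith [Real.exp_pos (-1:ℝ)]
    linarith
  have hfrac : s/4 ≤ (E-1)/s := by
    rw [le_div_iff₀ hs]; nlinarith
  calc s/16 = s/4 * (1/4) := by ring
    _ ≤ (E-1)/s * Real.exp (s/(E-1) - 1) := by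
        apply mul_le_mul hfrac hexp (by norm_num) (le_of_lt (div_pos hE1 hs))
    _ = Nfun s := rfl

lemma Nfun_contOn : ContinuousOn Nfun (Set.Ioi (0:ℝ)) := by
  apply ContinuousOn.mul
  · apply ContinuousOn.div
    · exact (Real.continuous_exp.sub continuous_const).continuousOn
    · exact continuousOn_id
    · intro x hx; exact ne_of_gt hx
  · apply Real.continuous_exp.comp_continuousOn
    apply ContinuousOn.sub _ continuousOn_const
    apply ContinuousOn.div continuousOn_id (Real.continuous_exp.sub continuous_const).continuousOn
    intro x hx
    have hx' : (0:ℝ) < x := hx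
    have := Real.add_one_lt_exp (ne_of_gt hx')
    intro hc
    have hc' : Real.exp x - 1 = 0 := hc
    linarith

lemma Nfun_surj {G : ℝ} (hG : 1 < G) : ∃ s : ℝ, 0 < s ∧ Nfun s = G := by
  set s₀ := Real.log G with hs₀
  have hs₀pos : 0 < s₀ := Real.log_pos hG
  set s₁ := max s₀ (16 * G) with hs₁
  have hs₀₁ : s₀ ≤ s₁ := le_max_left _ _
  have h₀ : Nfun s₀ ≤ G := by
    calc Nfun s₀ ≤ Real.exp s₀ := Nfun_le hs₀pos
      _ = G := Real.exp_log (by linarith)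
  have hs₁pos : 0 < s₁ := lt_of_lt_of_le hs₀pos hs₀₁
  have h₁ : G ≤ Nfun s₁ := by
    calc G = 16 * G / 16 := by ring
      _ ≤ s₁ / 16 := by
          have : 16 * G ≤ s₁ := le_max_right _ _
          linarith
      _ ≤ Nfun s₁ := Nfun_ge hs₁pos
  have hsub : Set.Icc s₀ s₁ ⊆ Set.Ioi (0:ℝ) := fun x hx => lt_of_lt_of_le hs₀pos hx.1
  have := intermediate_value_Icc hs₀₁ (Nfun_contOn.mono hsub)
  obtain ⟨s, hsmem, hNs⟩ := this ⟨h₀, h₁⟩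
  exact ⟨s, lt_of_lt_of_le hs₀pos hsmem.1, hNs⟩



lemma iavg_const {k c d : ℝ} (h : c < d) : iavg c d (fun _ => k) = k := by
  have hne : d - c ≠ 0 := ne_of_gt (by linarith)
  rw [iavg, intervalIntegral.integral_const, smul_eq_mul]
  field_simp

lemma iavg_step {θ a b c d : ℝ} (h : c < d) :
    iavg c d (fun t => if t < θ then a else b) =
      ((max c (min d θ) - c)/(d-c)) * a + (1 - (max c (min d θ) - c)/(d-c)) * b := by
  have hne : d - c ≠ 0 := ne_of_gt (by linarith)
  rw [iavg, integral_step θ a b c d h.le]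
  field_simp
  ring

theorem buckley_domain_attained (δ x₁ x₂ : ℝ) (hδ : 1 ≤ δ) (hx₁ : 0 < x₁)
    (hlow : Real.log (x₁ / δ) ≤ x₂) (hhigh : x₂ ≤ Real.log x₁) :
    ∃ w : ℝ → ℝ, (∀ t, 0 ≤ w t) ∧
      IntervalIntegrable w volume 0 1 ∧
      IntervalIntegrable (fun t => Real.log (w t)) volume 0 1 ∧
      (∀ c d : ℝ, 0 ≤ c → c < d → d ≤ 1 →
        iavg c d w ≤ δ * Real.exp (iavg c d (fun t => Real.log (w t)))) ∧
      iavg 0 1 w = x₁ ∧ iavg 0 1 (fun t => Real.log (w t)) = x₂ := by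
  have hδ0 : (0:ℝ) < δ := by linarith
  rcases eq_or_lt_of_le hhigh with heq | hlt
  · -- constant weight
    refine ⟨fun _ => x₁, fun t => hx₁.le, intervalIntegrable_const, intervalIntegrable_const,
      ?_, iavg_const one_pos, ?_⟩
    · intro c d hc hcd hd
      rw [iavg_const hcd, iavg_const hcd, Real.exp_log hx₁]
      nlinarith
    · rw [iavg_const one_pos, ← heq]
  · -- nontrivial step weight
    set G := x₁ * Real.exp (-x₂) with hGdef
    have hexppos : (0:ℝ) < Real.exp x₂ := Real.exp_pos _
    have hG1 : 1 < G := by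
      have h1 : Real.exp x₂ < x₁ := by
        have := Real.exp_lt_exp.mpr hlt
        rwa [Real.exp_log hx₁] at this
      have hi : 0 < (Real.exp x₂)⁻¹ := inv_pos.mpr hexppos
      rw [hGdef, Real.exp_neg]
      nlinarith [mul_inv_cancel₀ (ne_of_gt hexppos)]
    have hGδ : G ≤ δ := by
      have h2 : x₁ / δ ≤ Real.exp x₂ := by
        have := Real.exp_le_exp.mpr hlow
        rwa [Real.exp_log (div_pos hx₁ hδ0)] at this
      rw [hGdef, Real.exp_neg]
      rw [div_le_iff₀ hδ0] at h2
      have := inv_pos.mpr hexppos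
      calc x₁ * (Real.exp x₂)⁻¹ ≤ (δ * Real.exp x₂) * (Real.exp x₂)⁻¹ := by nlinarith
        _ = δ := by field_simp
    obtain ⟨s, hs, hNs⟩ := Nfun_surj hG1
    set E := Real.exp s with hEdef
    have hEpos : (0:ℝ) < E := Real.exp_pos s
    have hE1 : (0:ℝ) < E - 1 := by
      have := Real.add_one_lt_exp (ne_of_gt hs); simp only [← hEdef] at this; linarith
    have hEgt : s < E - 1 := by
      have := Real.add_one_lt_exp (ne_of_gt hs); simp only [← hEdef] at this; linarith
    set v := x₁ * s / (E - 1) with hvdef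
    have hv : 0 < v := div_pos (mul_pos hx₁ hs) hE1
    set u := E * v with hudef
    have hu : 0 < u := mul_pos hEpos hv
    set θ := ((E-1)/s - 1)/(E-1) with hθdef
    have hθ0 : 0 ≤ θ := by
      apply div_nonneg _ hE1.le
      rw [sub_nonneg, le_div_iff₀ hs]
      linarith
    have hθ1 : θ ≤ 1 := by
      rw [hθdef, div_le_one hE1, sub_le_iff_le_add, div_le_iff₀ hs]
      have hinv : 1 - s ≤ E⁻¹ := by
        have h := Real.add_one_le_exp (-s)
        rw [Real.exp_neg] at h
        simp only [← hEdef] at h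
        linarith
      nlinarith [mul_le_mul_of_nonneg_right hinv hEpos.le, inv_mul_cancel₀ (ne_of_gt hEpos)]
    have hθE : θ * (E - 1) = (E-1)/s - 1 := div_mul_cancel₀ _ (ne_of_gt hE1)
    have hθs : θ * s = 1 - s/(E-1) := by
      rw [hθdef]
      field_simp
    have hlogu : Real.log u = s + Real.log v := by
      rw [hudef, Real.log_mul (ne_of_gt hEpos) (ne_of_gt hv), hEdef, Real.log_exp]
    refine ⟨fun t => if t < θ then u else v, ?_, step_ii θ u v 0 1, ?_, ?_, ?_, ?_⟩
    · intro t; dsimp only; split <;> positivity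
    · have : (fun t => Real.log (if t < θ then u else v))
          = fun t => if t < θ then Real.log u else Real.log v := by
        funext t; exact apply_ite Real.log _ _ _
      rw [this]
      exact step_ii θ _ _ 0 1
    · intro c d hc hcd hd
      have hlogfun : (fun t => Real.log (if t < θ then u else v))
          = fun t => if t < θ then Real.log u else Real.log v := by
        funext t; exact apply_ite Real.log _ _ _
      rw [hlogfun, iavg_step hcd, iavg_step hcd]
      set L := (max c (min d θ) - c)/(d-c) with hLdef
      have hmle : max c (min d θ) ≤ d := max_le hcd.le (min_le_left _ _)
      have hmge : c ≤ max c (min d θ) := le_max_left _ _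
      have hdc : (0:ℝ) < d - c := by linarith
      have hL0 : 0 ≤ L := div_nonneg (by linarith) hdc.le
      have hL1 : L ≤ 1 := by
        rw [hLdef, div_le_one hdc]; linarith
      have hexp : L * Real.log u + (1 - L) * Real.log v = Real.log v + L * s := by
        rw [hlogu]; ring
      rw [hexp, Real.exp_add, Real.exp_log hv]
      have hkey : 1 + L * (E - 1) ≤ Nfun s * Real.exp (L * s) := key_ineq hs hL0
      rw [hNs] at hkey
      have hexpLs : (0:ℝ) < Real.exp (L * s) := Real.exp_pos _
      have : 1 + L * (E-1) ≤ δ * Real.exp (L * s) := by nlinarith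
      have hlhs : L * u + (1 - L) * v = v * (1 + L * (E-1)) := by rw [hudef]; ring
      rw [hlhs]
      calc v * (1 + L * (E-1)) ≤ v * (δ * Real.exp (L * s)) :=
            mul_le_mul_of_nonneg_left this hv.le
        _ = δ * (v * Real.exp (L*s)) := by ring
    · rw [iavg_step one_pos]
      rw [min_eq_right hθ1, max_eq_right hθ0]
      have : (θ - 0)/(1 - 0) = θ := by norm_num
      rw [this, hudef]
      have : θ * (E * v) + (1 - θ) * v = v * (1 + θ * (E-1)) := by ring
      rw [this, hθE, hvdef]
      field_simp
      ring
    · have hlogfun : (fun t => Real.log (if t < θ then u else v))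
          = fun t => if t < θ then Real.log u else Real.log v := by
        funext t; exact apply_ite Real.log _ _ _
      rw [hlogfun, iavg_step one_pos, min_eq_right hθ1, max_eq_right hθ0]
      have h0 : (θ - 0)/(1 - 0) = θ := by norm_num
      rw [h0, hlogu]
      have hNlog : Real.log (E-1) - Real.log s + (s/(E-1) - 1) = Real.log x₁ - x₂ := by
        have h1 : Real.log (Nfun s) = Real.log ((E-1)/s) + (s/(E-1) - 1) := by
          rw [Nfun, ← hEdef, Real.log_mul (ne_of_gt (div_pos hE1 hs)) (ne_of_gt (Real.exp_pos _)),
            Real.log_exp]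
        have h2 : Real.log G = Real.log x₁ - x₂ := by
          rw [hGdef, Real.log_mul (ne_of_gt hx₁) (ne_of_gt (Real.exp_pos _)), Real.log_exp]
          ring
        rw [hNs, h2, Real.log_div (ne_of_gt hE1) (ne_of_gt hs)] at h1
        linarith
      have hlogv : Real.log v = Real.log x₁ + Real.log s - Real.log (E-1) := by
        rw [hvdef, Real.log_div (by positivity) (ne_of_gt hE1),
          Real.log_mul (ne_of_gt hx₁) (ne_of_gt hs)]
      have : θ * (s + Real.log v) + (1 - θ) * Real.log v = Real.log v + θ * s := by ring
      rw [this, hθs, hlogv]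
      linarith
end

section
/- Let φ ∈ L²(I), I an interval, I₁ = {s ∈ I : φ(s) < d}, I₂ = {s ∈ I : φ(s) ≥ d}, β_k = |I_k|/|I|, and C_dφ = min(φ,d). Then [⟨φ²⟩_I - ⟨φ⟩_I²] - [⟨(C_dφ)²⟩_I - ⟨C_dφ⟩_I²] = β₂[⟨φ²⟩_{I₂} - ⟨φ⟩_{I₂}²] + β₁β₂[⟨φ⟩_{I₂} - d][⟨φ⟩_{I₂} + d - 2⟨φ⟩_{I₁}]. -/
open MeasureTheory

/-- Average of `f` over the set `s`. -/
noncomputable def setAvg (s : Set ℝ) (f : ℝ → ℝ) : ℝ :=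
  ((volume s).toReal)⁻¹ * ∫ t in s, f t

theorem cutoff_identity (a b d : ℝ) (hab : a < b) (φ : ℝ → ℝ) (hφm : Measurable φ)
    (hφ : IntegrableOn φ (Set.Icc a b) volume)
    (hφ2 : IntegrableOn (fun t => (φ t) ^ 2) (Set.Icc a b) volume)
    (I₁ I₂ : Set ℝ)
    (hI₁ : I₁ = {t ∈ Set.Icc a b | φ t < d})
    (hI₂ : I₂ = {t ∈ Set.Icc a b | d ≤ φ t})
    (h₁ : 0 < volume I₁) (h₂ : 0 < volume I₂) :
    (setAvg (Set.Icc a b) (fun t => (φ t) ^ 2) - (setAvg (Set.Icc a b) φ) ^ 2) -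
      (setAvg (Set.Icc a b) (fun t => (min (φ t) d) ^ 2) -
        (setAvg (Set.Icc a b) (fun t => min (φ t) d)) ^ 2) =
    ((volume I₂).toReal / (volume (Set.Icc a b)).toReal) *
        (setAvg I₂ (fun t => (φ t) ^ 2) - (setAvg I₂ φ) ^ 2) +
      ((volume I₁).toReal / (volume (Set.Icc a b)).toReal) *
        ((volume I₂).toReal / (volume (Set.Icc a b)).toReal) *
        (setAvg I₂ φ - d) * (setAvg I₂ φ + d - 2 * setAvg I₁ φ) := by
  have hm1 : MeasurableSet I₁ := by
    rw [hI₁]; exact measurableSet_Icc.inter (hφm measurableSet_Iio)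
  have hm2 : MeasurableSet I₂ := by
    rw [hI₂]; exact measurableSet_Icc.inter (hφm measurableSet_Ici)
  have hsub1 : I₁ ⊆ Set.Icc a b := by rw [hI₁]; exact Set.sep_subset _ _
  have hsub2 : I₂ ⊆ Set.Icc a b := by rw [hI₂]; exact Set.sep_subset _ _
  have hdisj : Disjoint I₁ I₂ := by
    rw [hI₁, hI₂, Set.disjoint_left]
    rintro t ⟨_, h⟩ ⟨_, h'⟩; exact absurd h' (not_le.mpr h)
  have hunion : I₁ ∪ I₂ = Set.Icc a b := by
    rw [hI₁, hI₂]
    ext t; constructor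
    · rintro (⟨ht, _⟩ | ⟨ht, _⟩) <;> exact ht
    · intro ht
      rcases lt_or_ge (φ t) d with h | h
      · exact Or.inl ⟨ht, h⟩
      · exact Or.inr ⟨ht, h⟩
  have hfin : volume (Set.Icc a b) < ⊤ := by
    rw [Real.volume_Icc]; exact ENNReal.ofReal_lt_top
  have hfin1 : volume I₁ ≠ ⊤ := (lt_of_le_of_lt (measure_mono hsub1) hfin).ne
  have hfin2 : volume I₂ ≠ ⊤ := (lt_of_le_of_lt (measure_mono hsub2) hfin).ne
  set m₁ := (volume I₁).toReal with hm₁def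
  set m₂ := (volume I₂).toReal with hm₂def
  have hm₁pos : 0 < m₁ := ENNReal.toReal_pos h₁.ne' hfin1
  have hm₂pos : 0 < m₂ := ENNReal.toReal_pos h₂.ne' hfin2
  have hmsum : (volume (Set.Icc a b)).toReal = m₁ + m₂ := by
    rw [← hunion, measure_union hdisj hm2, ENNReal.toReal_add hfin1 hfin2]
  -- pointwise identifications
  have heq1 : Set.EqOn (fun t => min (φ t) d) φ I₁ := by
    intro t ht; rw [hI₁] at ht; exact min_eq_left ht.2.le
  have heq1' : Set.EqOn (fun t => (min (φ t) d) ^ 2) (fun t => (φ t) ^ 2) I₁ := by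
    intro t ht; simp [heq1 ht]
  have heq2 : Set.EqOn (fun t => min (φ t) d) (fun _ => d) I₂ := by
    intro t ht; rw [hI₂] at ht; exact min_eq_right ht.2
  have heq2' : Set.EqOn (fun t => (min (φ t) d) ^ 2) (fun _ => d ^ 2) I₂ := by
    intro t ht; simp [heq2 ht]
  -- integrability
  have hφ1 : IntegrableOn φ I₁ volume := hφ.mono_set hsub1
  have hφ2' : IntegrableOn φ I₂ volume := hφ.mono_set hsub2
  have hφ21 : IntegrableOn (fun t => (φ t) ^ 2) I₁ volume := hφ2.mono_set hsub1
  have hφ22 : IntegrableOn (fun t => (φ t) ^ 2) I₂ volume := hφ2.mono_set hsub2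
  have hmin1 : IntegrableOn (fun t => min (φ t) d) I₁ volume :=
    hφ1.congr_fun (fun t ht => (heq1 ht).symm) hm1
  have hmin2 : IntegrableOn (fun t => min (φ t) d) I₂ volume :=
    (integrableOn_const (lt_of_le_of_lt (measure_mono hsub2) hfin).ne).congr_fun
      (fun t ht => (heq2 ht).symm) hm2
  have hmin21 : IntegrableOn (fun t => (min (φ t) d) ^ 2) I₁ volume :=
    hφ21.congr_fun (fun t ht => (heq1' ht).symm) hm1
  have hmin22 : IntegrableOn (fun t => (min (φ t) d) ^ 2) I₂ volume :=
    (integrableOn_const (lt_of_le_of_lt (measure_mono hsub2) hfin).ne).congr_fun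
      (fun t ht => (heq2' ht).symm) hm2
  -- split the integrals
  have hsplit : ∀ (f : ℝ → ℝ), IntegrableOn f I₁ volume → IntegrableOn f I₂ volume →
      ∫ t in Set.Icc a b, f t = (∫ t in I₁, f t) + ∫ t in I₂, f t := by
    intro f h1 h2
    rw [← hunion, setIntegral_union hdisj hm2 h1 h2]
  set A₁ := ∫ t in I₁, φ t with hA₁
  set A₂ := ∫ t in I₂, φ t with hA₂
  set B₁ := ∫ t in I₁, (φ t) ^ 2 with hB₁
  set B₂ := ∫ t in I₂, (φ t) ^ 2 with hB₂
  have e1 : ∫ t in Set.Icc a b, φ t = A₁ + A₂ := hsplit φ hφ1 hφ2'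
  have e2 : ∫ t in Set.Icc a b, (φ t) ^ 2 = B₁ + B₂ := hsplit _ hφ21 hφ22
  have e3 : ∫ t in Set.Icc a b, min (φ t) d = A₁ + m₂ * d := by
    rw [hsplit _ hmin1 hmin2, setIntegral_congr_fun hm1 heq1, setIntegral_congr_fun hm2 heq2,
      setIntegral_const]
    simp [hm₂def, smul_eq_mul, Measure.real]
    rfl
  have e4 : ∫ t in Set.Icc a b, (min (φ t) d) ^ 2 = B₁ + m₂ * d ^ 2 := by
    rw [hsplit _ hmin21 hmin22, setIntegral_congr_fun hm1 heq1', setIntegral_congr_fun hm2 heq2',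
      setIntegral_const]
    simp [hm₂def, smul_eq_mul, Measure.real]
    rfl
  unfold setAvg
  rw [e1, e2, e3, e4, hmsum]
  simp only [← hm₁def, ← hm₂def, ← hA₁, ← hA₂, ← hB₁, ← hB₂]
  have h12 : m₁ + m₂ ≠ 0 := by positivity
  field_simp
  ring
end

section
/- For 0 < c < d, ⟨log²t⟩_{[c,d]} - (⟨log t⟩_{[c,d]})² = 1 - (cd/(d-c)²)·(log(d/c))², where ⟨f⟩_{[c,d]} = (1/(d-c))∫_c^d f(t)dt. -/
open MeasureTheory

lemma integral_log_sq (c d : ℝ) (hc : 0 < c) (hcd : c < d) :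
    ∫ t in c..d, (Real.log t) ^ 2 =
      (d * (Real.log d) ^ 2 - 2 * d * Real.log d + 2 * d) -
      (c * (Real.log c) ^ 2 - 2 * c * Real.log c + 2 * c) := by
  have h : ∀ t ∈ Set.uIcc c d,
      HasDerivAt (fun t => t * (Real.log t) ^ 2 - 2 * t * Real.log t + 2 * t)
        ((Real.log t) ^ 2) t := by
    intro t ht
    have ht0 : 0 < t := by
      rcases Set.mem_uIcc.mp ht with h | h
      · linarith [h.1]
      · linarith [h.1, hcd]
    have hlog := Real.hasDerivAt_log (ne_of_gt ht0)
    have h1 : HasDerivAt (fun t : ℝ => t * (Real.log t) ^ 2)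
        (1 * (Real.log t) ^ 2 + t * (↑2 * Real.log t ^ (2 - 1) * t⁻¹)) t :=
      (hasDerivAt_id t).mul (hlog.pow 2)
    have h2 : HasDerivAt (fun t : ℝ => 2 * t * Real.log t)
        (2 * Real.log t + 2 * t * t⁻¹) t := by
      have := ((hasDerivAt_id t).const_mul 2).mul hlog
      exact this.congr_deriv (by simp)
    have h3 : HasDerivAt (fun t : ℝ => 2 * t) 2 t := by
      simpa using (hasDerivAt_id t).const_mul 2
    have := (h1.sub h2).add h3
    refine this.congr_deriv ?_
    field_simp [ht0.ne']
    ring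
  have hint : IntervalIntegrable (fun t => (Real.log t) ^ 2) volume c d := by
    apply ContinuousOn.intervalIntegrable
    have : ∀ t ∈ Set.uIcc c d, t ≠ 0 := by
      intro t ht
      rcases Set.mem_uIcc.mp ht with h | h
      · linarith [h.1]
      · linarith [h.1, hcd]
    exact (Real.continuousOn_log.mono (by intro t ht; exact this t ht)).pow 2
  rw [intervalIntegral.integral_eq_sub_of_hasDerivAt h hint]

theorem log_oscillation_identity (c d : ℝ) (hc : 0 < c) (hcd : c < d) :
    iavg c d (fun t => (Real.log t) ^ 2) - (iavg c d (fun t => Real.log t)) ^ 2 =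
      1 - (c * d / (d - c) ^ 2) * (Real.log (d / c)) ^ 2 := by
  have hd : 0 < d := lt_trans hc hcd
  have hsub : d - c ≠ 0 := by linarith
  rw [iavg, iavg, integral_log_sq c d hc hcd,
    integral_log, Real.log_div (ne_of_gt hd) (ne_of_gt hc)]
  field_simp
  ring
end

section
/- For ε ≥ 1 the function φ(t) = ε·log(1/t) on (0,1) satisfies ∫_0^1 e^{φ(t)} dt = ∞, while ⟨φ²⟩_I - ⟨φ⟩_I² ≤ ε² for every subinterval I ⊂ (0,1). -/
open MeasureTheory

open Real intervalIntegral in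
/-- The dominating function `16 * t^(-1/2)` is integrable on `(0,1)`. -/
lemma JN_dom_integrable :
    IntegrableOn (fun t : ℝ => 16 * t ^ (-(1:ℝ)/2)) (Set.Ioo (0:ℝ) 1) := by
  have : IntegrableOn (fun t : ℝ => t ^ (-(1:ℝ)/2)) (Set.Ioo (0:ℝ) 1) := by
    rw [integrableOn_Ioo_rpow_iff one_pos]; norm_num
  exact this.const_mul 16

open Real in
lemma JN_log_bound {t : ℝ} (ht : t ∈ Set.Ioo (0:ℝ) 1) :
    |Real.log t| ≤ 4 * t ^ (-(1:ℝ)/4) := by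
  obtain ⟨h0, h1⟩ := ht
  have hlt : Real.log t < 0 := Real.log_neg h0 h1
  have hp : (0:ℝ) < t ^ (-(1:ℝ)/4) := Real.rpow_pos_of_pos h0 _
  have hlog : Real.log (t ^ (-(1:ℝ)/4)) ≤ t ^ (-(1:ℝ)/4) - 1 :=
    Real.log_le_sub_one_of_pos hp
  rw [Real.log_rpow h0] at hlog
  rw [abs_of_neg hlt]
  nlinarith

open Real in
lemma JN_log_intervalIntegrable {c d : ℝ} (hc : 0 ≤ c) (hcd : c < d) (hd : d ≤ 1) :
    IntervalIntegrable Real.log volume c d := by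
  rw [intervalIntegrable_iff_integrableOn_Ioo_of_le hcd.le]
  have hsub : Set.Ioo c d ⊆ Set.Ioo (0:ℝ) 1 := fun t ht =>
    ⟨lt_of_le_of_lt hc ht.1, lt_of_lt_of_le ht.2 hd⟩
  refine Integrable.mono (JN_dom_integrable.mono_set hsub)
    Real.measurable_log.aestronglyMeasurable.restrict ?_
  rw [ae_restrict_iff' measurableSet_Ioo]
  filter_upwards with t ht
  have ht' := hsub ht
  have h1 : |Real.log t| ≤ 4 * t ^ (-(1:ℝ)/4) := JN_log_bound ht'
  have hp2 : (0:ℝ) < t ^ (-(1:ℝ)/2) := Real.rpow_pos_of_pos ht'.1 _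
  have hle : t ^ (-(1:ℝ)/4) ≤ t ^ (-(1:ℝ)/2) := by
    apply Real.rpow_le_rpow_of_exponent_ge ht'.1 ht'.2.le
    norm_num
  have h16 : (0:ℝ) < 16 * t ^ (-(1:ℝ)/2) :=
    mul_pos (by norm_num) (Real.rpow_pos_of_pos ht'.1 _)
  rw [Real.norm_eq_abs, Real.norm_eq_abs, abs_of_pos h16]
  linarith

open Real in
lemma JN_logsq_intervalIntegrable {c d : ℝ} (hc : 0 ≤ c) (hcd : c < d) (hd : d ≤ 1) :
    IntervalIntegrable (fun t => (Real.log t) ^ 2) volume c d := by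
  rw [intervalIntegrable_iff_integrableOn_Ioo_of_le hcd.le]
  have hsub : Set.Ioo c d ⊆ Set.Ioo (0:ℝ) 1 := fun t ht =>
    ⟨lt_of_le_of_lt hc ht.1, lt_of_lt_of_le ht.2 hd⟩
  refine Integrable.mono (JN_dom_integrable.mono_set hsub)
    (Real.measurable_log.pow_const 2).aestronglyMeasurable.restrict ?_
  rw [ae_restrict_iff' measurableSet_Ioo]
  filter_upwards with t ht
  have ht' := hsub ht
  have h1 : |Real.log t| ≤ 4 * t ^ (-(1:ℝ)/4) := JN_log_bound ht'
  have hp4 : (0:ℝ) < t ^ (-(1:ℝ)/4) := Real.rpow_pos_of_pos ht'.1 _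
  have hsq : (t ^ (-(1:ℝ)/4)) ^ 2 = t ^ (-(1:ℝ)/2) := by
    rw [← Real.rpow_natCast (t ^ (-(1:ℝ)/4)) 2, ← Real.rpow_mul ht'.1.le]
    norm_num
  have h16 : (0:ℝ) < 16 * t ^ (-(1:ℝ)/2) :=
    mul_pos (by norm_num) (Real.rpow_pos_of_pos ht'.1 _)
  rw [Real.norm_eq_abs, Real.norm_eq_abs, abs_of_nonneg (sq_nonneg (Real.log t)),
    abs_of_pos h16]
  have : (Real.log t) ^ 2 ≤ (4 * t ^ (-(1:ℝ)/4)) ^ 2 := by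
    rw [← sq_abs]
    apply pow_le_pow_left₀ (abs_nonneg _) h1 2
  nlinarith [sq_nonneg (t ^ (-(1:ℝ)/4))]

open Real in
lemma JN_integral_log {c d : ℝ} (hc : 0 ≤ c) (hcd : c < d) (hd : d ≤ 1) :
    ∫ t in c..d, Real.log t =
      (d * Real.log d - d) - (c * Real.log c - c) := by
  apply intervalIntegral.integral_eq_sub_of_hasDeriv_right_of_le hcd.le
  · exact (Real.continuous_mul_log.sub continuous_id).continuousOn
  · intro x hx
    have hx0 : x ≠ 0 := (lt_of_le_of_lt hc hx.1).ne'
    have h := (Real.hasDerivAt_mul_log hx0).sub (hasDerivAt_id x)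
    have h' : HasDerivAt (fun t => t * Real.log t - t) (Real.log x) x := by
      exact h.congr_deriv (by ring)
    exact h'.hasDerivWithinAt
  · exact JN_log_intervalIntegrable hc hcd hd

open Real in
lemma JN_integral_logsq {c d : ℝ} (hc : 0 ≤ c) (hcd : c < d) (hd : d ≤ 1) :
    ∫ t in c..d, (Real.log t) ^ 2 =
      (d * (Real.log d) ^ 2 - 2 * (d * Real.log d) + 2 * d) -
        (c * (Real.log c) ^ 2 - 2 * (c * Real.log c) + 2 * c) := by
  apply intervalIntegral.integral_eq_sub_of_hasDeriv_right_of_le hcd.le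
  · -- continuity of `t ↦ t (log t)² - 2 t log t + 2 t` on `[c,d] ⊆ [0,1]`
    have hcont : Continuous fun t : ℝ =>
        4 * (Real.sqrt t * Real.log (Real.sqrt t)) ^ 2 - 2 * (t * Real.log t) + 2 * t := by
      have h1 : Continuous fun t : ℝ => Real.sqrt t * Real.log (Real.sqrt t) :=
        Real.continuous_mul_log.comp Real.continuous_sqrt
      exact ((continuous_const.mul (h1.pow 2)).sub
        (continuous_const.mul Real.continuous_mul_log)).add
        (continuous_const.mul continuous_id)
    apply hcont.continuousOn.congr
    intro t ht
    dsimp only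
    have ht0 : 0 ≤ t := le_trans hc ht.1
    rcases eq_or_lt_of_le ht0 with h | h
    · simp [← h]
    · have hs : Real.log (Real.sqrt t) = Real.log t / 2 := Real.log_sqrt ht0
      have hsq : Real.sqrt t ^ 2 = t := Real.sq_sqrt ht0
      rw [hs]
      nlinarith [hsq]
  · intro x hx
    have hx0 : (0:ℝ) < x := lt_of_le_of_lt hc hx.1
    have h1 : HasDerivAt (fun t : ℝ => t * (Real.log t) ^ 2)
        (1 * (Real.log x) ^ 2 + x * (2 * Real.log x ^ 1 * x⁻¹)) x :=
      (hasDerivAt_id x).mul ((Real.hasDerivAt_log hx0.ne').pow 2)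
    have h2 : HasDerivAt (fun t : ℝ => 2 * (t * Real.log t))
        (2 * (Real.log x + 1)) x := (Real.hasDerivAt_mul_log hx0.ne').const_mul 2
    have h3 : HasDerivAt (fun t : ℝ => 2 * t) 2 x := by
      simpa using (hasDerivAt_id x).const_mul (2:ℝ)
    have h : HasDerivAt (fun t : ℝ => t * (Real.log t) ^ 2 - 2 * (t * Real.log t) + 2 * t)
        ((Real.log x) ^ 2) x := by
      refine ((h1.sub h2).add h3).congr_deriv ?_
      field_simp
      ring
    exact h.hasDerivWithinAt
  · exact JN_logsq_intervalIntegrable hc hcd hd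

theorem JN_blowup_at_one (ε : ℝ) (hε : 1 ≤ ε) :
    (∫⁻ t in Set.Ioo (0:ℝ) 1, ENNReal.ofReal (Real.exp (ε * Real.log (1 / t)))) = ⊤ ∧
    ∀ c d : ℝ, 0 ≤ c → c < d → d ≤ 1 →
      iavg c d (fun t => (ε * Real.log (1 / t)) ^ 2) -
        (iavg c d (fun t => ε * Real.log (1 / t))) ^ 2 ≤ ε ^ 2 := by
  constructor
  · -- divergence of the exponential integral
    by_contra h
    have hfin : (∫⁻ t in Set.Ioo (0:ℝ) 1,
        ENNReal.ofReal (Real.exp (ε * Real.log (1 / t)))) < ⊤ := lt_top_iff_ne_top.2 h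
    have hmeas : Measurable fun t : ℝ => Real.exp (ε * Real.log (1 / t)) := by
      have h1 : Measurable fun t : ℝ => (1:ℝ) / t := by
        simpa [one_div] using (measurable_inv : Measurable fun t : ℝ => t⁻¹)
      exact Real.measurable_exp.comp (measurable_const.mul (Real.measurable_log.comp h1))
    have hint : IntegrableOn (fun t : ℝ => Real.exp (ε * Real.log (1 / t)))
        (Set.Ioo (0:ℝ) 1) := by
      refine ⟨hmeas.aestronglyMeasurable.restrict, ?_⟩
      simp only [HasFiniteIntegral]
      have : ∀ t : ℝ, ‖Real.exp (ε * Real.log (1 / t))‖ₑ =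
          ENNReal.ofReal (Real.exp (ε * Real.log (1 / t))) := fun t =>
        Real.enorm_eq_ofReal (Real.exp_nonneg _)
      simp only [this]
      exact hfin
    have hint' : IntegrableOn (fun t : ℝ => t ^ (-ε)) (Set.Ioo (0:ℝ) 1) := by
      apply hint.congr_fun _ measurableSet_Ioo
      intro t ht
      show Real.exp (ε * Real.log (1 / t)) = t ^ (-ε)
      have ht0 : (0:ℝ) < t := ht.1
      have h1 : (0:ℝ) < 1 / t := by positivity
      rw [Real.rpow_def_of_pos ht0]
      rw [show Real.log (1 / t) = -Real.log t by rw [one_div, Real.log_inv]]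
      ring_nf
    rw [intervalIntegral.integrableOn_Ioo_rpow_iff one_pos] at hint'
    linarith
  · -- the BMO bound
    intro c d hc hcd hd
    have hlt : (0:ℝ) < d - c := by linarith
    have hne : (d - c) ≠ 0 := hlt.ne'
    -- rewrite the integrals
    have i2 : (∫ t in c..d, (ε * Real.log (1 / t)) ^ 2) =
        ε ^ 2 * ∫ t in c..d, (Real.log t) ^ 2 := by
      rw [← intervalIntegral.integral_const_mul]
      apply intervalIntegral.integral_congr
      intro t _
      simp only [one_div, Real.log_inv]
      ring
    have i1 : (∫ t in c..d, ε * Real.log (1 / t)) =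
        (-ε) * ∫ t in c..d, Real.log t := by
      rw [← intervalIntegral.integral_const_mul]
      apply intervalIntegral.integral_congr
      intro t _
      simp only [one_div, Real.log_inv]
      ring
    set p := Real.log c with hp
    set q := Real.log d with hq
    set A : ℝ := (d * q ^ 2 - 2 * (d * q) + 2 * d) - (c * p ^ 2 - 2 * (c * p) + 2 * c) with hA
    set B : ℝ := (d * q - d) - (c * p - c) with hB
    have hFA : (∫ t in c..d, (Real.log t) ^ 2) = A := JN_integral_logsq hc hcd hd
    have hGB : (∫ t in c..d, Real.log t) = B := JN_integral_log hc hcd hd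
    -- the key algebraic identity
    have key : (d - c) * A - B ^ 2 = (d - c) ^ 2 - c * d * (q - p) ^ 2 := by
      rw [hA, hB]; ring
    have key2 : (d - c) * A - B ^ 2 ≤ (d - c) ^ 2 := by
      have : 0 ≤ c * d * (q - p) ^ 2 :=
        mul_nonneg (mul_nonneg hc (by linarith)) (sq_nonneg _)
      linarith
    rw [iavg, iavg, i2, i1, hFA, hGB]
    have h2 : (0:ℝ) < (d - c) ^ 2 := by positivity
    rw [show (d - c)⁻¹ * (ε ^ 2 * A) - ((d - c)⁻¹ * ((-ε) * B)) ^ 2 =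
        (ε ^ 2 * ((d - c) * A - B ^ 2)) / (d - c) ^ 2 by field_simp,
      div_le_iff₀ h2]
    nlinarith [mul_le_mul_of_nonneg_left key2 (sq_nonneg ε)]
end

section
/- Let 0 < ε < 1, δ ≥ ε, and define on Ω_δ = {x : x₁² ≤ x₂ ≤ x₁² + δ²} the function B₊(x) = ((1-√(δ²-x₂+x₁²))/(1-δ))·exp(x₁+√(δ²-x₂+x₁²)-δ), assuming also δ < 1. Then for any interior point x of Ω_δ, the Hessian quadratic form of B₊ at x applied to (Δ₁,Δ₂) equals -[((x₁+√(δ²-x₂+x₁²))Δ₁ - ½Δ₂)²/(√(δ²-x₂+x₁²)(1-δ))]·exp(x₁+√(δ²-x₂+x₁²)-δ); in particular the Hessian of B₊ is negative semidefinite with determinant zero. -/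
/-- The upper Monge--Ampère solution `B₊` for the John--Nirenberg problem. -/
noncomputable def JNBplus (δ x₁ x₂ : ℝ) : ℝ :=
  ((1 - Real.sqrt (δ ^ 2 - x₂ + x₁ ^ 2)) / (1 - δ)) *
    Real.exp (x₁ + Real.sqrt (δ ^ 2 - x₂ + x₁ ^ 2) - δ)

lemma JN_sqrt1 (δ y s : ℝ) (h : 0 < δ ^ 2 - y + s ^ 2) :
    HasDerivAt (fun t => Real.sqrt (δ ^ 2 - y + t ^ 2))
      (s / Real.sqrt (δ ^ 2 - y + s ^ 2)) s := by
  have h1 : HasDerivAt (fun t : ℝ => δ ^ 2 - y + t ^ 2) (2 * s) s := by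
    simpa using (hasDerivAt_pow 2 s).const_add (δ ^ 2 - y)
  have h2 := (Real.hasDerivAt_sqrt (ne_of_gt h)).comp s h1
  have hg : Real.sqrt (δ ^ 2 - y + s ^ 2) ≠ 0 := by
    positivity
  refine h2.congr_deriv ?_
  field_simp

lemma JN_sqrt2 (δ x₁ y : ℝ) (h : 0 < δ ^ 2 - y + x₁ ^ 2) :
    HasDerivAt (fun t => Real.sqrt (δ ^ 2 - t + x₁ ^ 2))
      (-(1 / (2 * Real.sqrt (δ ^ 2 - y + x₁ ^ 2)))) y := by
  have h1 : HasDerivAt (fun t : ℝ => δ ^ 2 - t + x₁ ^ 2) (-1) y := by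
    simpa using ((hasDerivAt_id y).const_sub (δ ^ 2)).add_const (x₁ ^ 2)
  have h2 := (Real.hasDerivAt_sqrt (ne_of_gt h)).comp y h1
  refine h2.congr_deriv ?_
  ring

lemma JN_d1 (δ y s : ℝ) (h : 0 < δ ^ 2 - y + s ^ 2) (hδ : (1:ℝ) - δ ≠ 0) :
    HasDerivAt (fun t => JNBplus δ t y)
      ((1 - Real.sqrt (δ ^ 2 - y + s ^ 2) - s) / (1 - δ) *
        Real.exp (s + Real.sqrt (δ ^ 2 - y + s ^ 2) - δ)) s := by
  have hg : (0:ℝ) < Real.sqrt (δ ^ 2 - y + s ^ 2) := Real.sqrt_pos.mpr h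
  set g := Real.sqrt (δ ^ 2 - y + s ^ 2) with hgdef
  have hs := JN_sqrt1 δ y s h
  have hin : HasDerivAt (fun t => t + Real.sqrt (δ ^ 2 - y + t ^ 2) - δ) (1 + s / g) s :=
    ((hasDerivAt_id s).add hs).sub_const δ
  have hE : HasDerivAt (fun t => Real.exp (t + Real.sqrt (δ ^ 2 - y + t ^ 2) - δ))
      (Real.exp (s + g - δ) * (1 + s / g)) s := by
    exact (Real.hasDerivAt_exp _).comp s hin
  have hA : HasDerivAt (fun t => (1 - Real.sqrt (δ ^ 2 - y + t ^ 2)) / (1 - δ))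
      (-(s / g) / (1 - δ)) s := by
    simpa using (((hasDerivAt_const s (1:ℝ)).sub hs).div_const (1 - δ))
  have := hA.mul hE
  rw [← hgdef] at this
  refine this.congr_deriv ?_
  field_simp [hg.ne']
  ring

lemma JN_d2 (δ x₁ y : ℝ) (h : 0 < δ ^ 2 - y + x₁ ^ 2) (hδ : (1:ℝ) - δ ≠ 0) :
    HasDerivAt (fun t => JNBplus δ x₁ t)
      (Real.exp (x₁ + Real.sqrt (δ ^ 2 - y + x₁ ^ 2) - δ) / (2 * (1 - δ))) y := by
  have hg : (0:ℝ) < Real.sqrt (δ ^ 2 - y + x₁ ^ 2) := Real.sqrt_pos.mpr h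
  set g := Real.sqrt (δ ^ 2 - y + x₁ ^ 2) with hgdef
  have hs := JN_sqrt2 δ x₁ y h
  have hin : HasDerivAt (fun t => x₁ + Real.sqrt (δ ^ 2 - t + x₁ ^ 2) - δ)
      (-(1 / (2 * g))) y := by
    simpa using (hs.const_add x₁).sub_const δ
  have hE : HasDerivAt (fun t => Real.exp (x₁ + Real.sqrt (δ ^ 2 - t + x₁ ^ 2) - δ))
      (Real.exp (x₁ + g - δ) * (-(1 / (2 * g)))) y := by
    exact (Real.hasDerivAt_exp _).comp y hin
  have hA : HasDerivAt (fun t => (1 - Real.sqrt (δ ^ 2 - t + x₁ ^ 2)) / (1 - δ))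
      ((1 / (2 * g)) / (1 - δ)) y := by
    simpa using (((hasDerivAt_const y (1:ℝ)).sub hs).div_const (1 - δ))
  have := hA.mul hE
  refine this.congr_deriv ?_
  field_simp [hg.ne']
  ring

theorem JNBplus_hessian (ε δ x₁ x₂ : ℝ) (hε : 0 < ε) (hε1 : ε < 1) (hεδ : ε ≤ δ)
    (hδ1 : δ < 1) (hlow : x₁ ^ 2 < x₂) (hhigh : x₂ < x₁ ^ 2 + δ ^ 2) :
    let d1 : ℝ → ℝ → ℝ := fun s y => deriv (fun t => JNBplus δ t y) s
    let d11 : ℝ := deriv (fun s => d1 s x₂) x₁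
    let d12 : ℝ := deriv (fun y => d1 x₁ y) x₂
    let d22 : ℝ := deriv (fun y => deriv (fun t => JNBplus δ x₁ t) y) x₂
    (∀ Δ₁ Δ₂ : ℝ,
      d11 * Δ₁ ^ 2 + 2 * d12 * Δ₁ * Δ₂ + d22 * Δ₂ ^ 2 =
        -(((x₁ + Real.sqrt (δ ^ 2 - x₂ + x₁ ^ 2)) * Δ₁ - (1 / 2) * Δ₂) ^ 2 /
            (Real.sqrt (δ ^ 2 - x₂ + x₁ ^ 2) * (1 - δ))) *
          Real.exp (x₁ + Real.sqrt (δ ^ 2 - x₂ + x₁ ^ 2) - δ)) ∧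
    (∀ Δ₁ Δ₂ : ℝ, d11 * Δ₁ ^ 2 + 2 * d12 * Δ₁ * Δ₂ + d22 * Δ₂ ^ 2 ≤ 0) ∧
    d11 * d22 - d12 ^ 2 = 0 := by
  intro d1 d11 d12 d22
  have h0 : 0 < δ ^ 2 - x₂ + x₁ ^ 2 := by linarith
  have hδ : (1:ℝ) - δ ≠ 0 := by intro h; linarith
  have hδ' : (0:ℝ) < 1 - δ := by linarith
  have hg : (0:ℝ) < Real.sqrt (δ ^ 2 - x₂ + x₁ ^ 2) := Real.sqrt_pos.mpr h0
  set g := Real.sqrt (δ ^ 2 - x₂ + x₁ ^ 2) with hgdef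
  set E := Real.exp (x₁ + g - δ) with hEdef
  -- neighborhood positivity in x₁
  have hev1 : ∀ᶠ s in nhds x₁, 0 < δ ^ 2 - x₂ + s ^ 2 := by
    have hc : ContinuousAt (fun s : ℝ => δ ^ 2 - x₂ + s ^ 2) x₁ := by fun_prop
    exact hc (Ioi_mem_nhds h0)
  have hev2 : ∀ᶠ y in nhds x₂, 0 < δ ^ 2 - y + x₁ ^ 2 := by
    have hc : ContinuousAt (fun y : ℝ => δ ^ 2 - y + x₁ ^ 2) x₂ := by fun_prop
    exact hc (Ioi_mem_nhds h0)
  -- d11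
  have hs1 := JN_sqrt1 δ x₂ x₁ h0
  rw [← hgdef] at hs1
  have e11 : d11 = (-(x₁ / g) - 1) / (1 - δ) * E + (1 - g - x₁) / (1 - δ) * (E * (1 + x₁ / g)) := by
    have heq1 : (fun s => d1 s x₂) =ᶠ[nhds x₁]
        (fun s => (1 - Real.sqrt (δ ^ 2 - x₂ + s ^ 2) - s) / (1 - δ) *
          Real.exp (s + Real.sqrt (δ ^ 2 - x₂ + s ^ 2) - δ)) := by
      filter_upwards [hev1] with s hs
      exact (JN_d1 δ x₂ s hs hδ).deriv
    have hA : HasDerivAt (fun s => (1 - Real.sqrt (δ ^ 2 - x₂ + s ^ 2) - s) / (1 - δ))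
        ((-(x₁ / g) - 1) / (1 - δ)) x₁ := by
      have := (((hasDerivAt_const x₁ (1:ℝ)).sub hs1).sub (hasDerivAt_id x₁)).div_const (1 - δ)
      refine this.congr_deriv ?_
      ring
    have hin : HasDerivAt (fun s => s + Real.sqrt (δ ^ 2 - x₂ + s ^ 2) - δ) (1 + x₁ / g) x₁ :=
      ((hasDerivAt_id x₁).add hs1).sub_const δ
    have hE : HasDerivAt (fun s => Real.exp (s + Real.sqrt (δ ^ 2 - x₂ + s ^ 2) - δ))
        (E * (1 + x₁ / g)) x₁ := by
      exact (Real.hasDerivAt_exp _).comp x₁ hin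
    have hF := hA.mul hE
    rw [← hgdef, ← hEdef] at hF
    calc d11 = deriv (fun s => (1 - Real.sqrt (δ ^ 2 - x₂ + s ^ 2) - s) / (1 - δ) *
          Real.exp (s + Real.sqrt (δ ^ 2 - x₂ + s ^ 2) - δ)) x₁ := heq1.deriv_eq
      _ = _ := hF.deriv
  -- d12
  have hs2 := JN_sqrt2 δ x₁ x₂ h0
  rw [← hgdef] at hs2
  have e12 : d12 = (1 / (2 * g)) / (1 - δ) * E + (1 - g - x₁) / (1 - δ) * (E * (-(1 / (2 * g)))) := by
    have heq2 : (fun y => d1 x₁ y) =ᶠ[nhds x₂]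
        (fun y => (1 - Real.sqrt (δ ^ 2 - y + x₁ ^ 2) - x₁) / (1 - δ) *
          Real.exp (x₁ + Real.sqrt (δ ^ 2 - y + x₁ ^ 2) - δ)) := by
      filter_upwards [hev2] with y hy
      exact (JN_d1 δ y x₁ hy hδ).deriv
    have hA : HasDerivAt (fun y => (1 - Real.sqrt (δ ^ 2 - y + x₁ ^ 2) - x₁) / (1 - δ))
        ((1 / (2 * g)) / (1 - δ)) x₂ := by
      have := (((hasDerivAt_const x₂ (1:ℝ)).sub hs2).sub_const x₁).div_const (1 - δ)
      refine this.congr_deriv ?_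
      ring
    have hin : HasDerivAt (fun y => x₁ + Real.sqrt (δ ^ 2 - y + x₁ ^ 2) - δ) (-(1 / (2 * g))) x₂ := by
      simpa using (hs2.const_add x₁).sub_const δ
    have hE : HasDerivAt (fun y => Real.exp (x₁ + Real.sqrt (δ ^ 2 - y + x₁ ^ 2) - δ))
        (E * (-(1 / (2 * g)))) x₂ := by
      exact (Real.hasDerivAt_exp _).comp x₂ hin
    have hF := hA.mul hE
    rw [← hgdef, ← hEdef] at hF
    calc d12 = deriv (fun y => (1 - Real.sqrt (δ ^ 2 - y + x₁ ^ 2) - x₁) / (1 - δ) *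
          Real.exp (x₁ + Real.sqrt (δ ^ 2 - y + x₁ ^ 2) - δ)) x₂ := heq2.deriv_eq
      _ = _ := hF.deriv
  -- d22
  have e22 : d22 = (E * (-(1 / (2 * g)))) / (2 * (1 - δ)) := by
    have heq3 : (fun y => deriv (fun t => JNBplus δ x₁ t) y) =ᶠ[nhds x₂]
        (fun y => Real.exp (x₁ + Real.sqrt (δ ^ 2 - y + x₁ ^ 2) - δ) / (2 * (1 - δ))) := by
      filter_upwards [hev2] with y hy
      exact (JN_d2 δ x₁ y hy hδ).deriv
    have hin : HasDerivAt (fun y => x₁ + Real.sqrt (δ ^ 2 - y + x₁ ^ 2) - δ) (-(1 / (2 * g))) x₂ := by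
      simpa using (hs2.const_add x₁).sub_const δ
    have hE : HasDerivAt (fun y => Real.exp (x₁ + Real.sqrt (δ ^ 2 - y + x₁ ^ 2) - δ))
        (E * (-(1 / (2 * g)))) x₂ := by
      exact (Real.hasDerivAt_exp _).comp x₂ hin
    have hF := hE.div_const (2 * (1 - δ))
    calc d22 = deriv (fun y => Real.exp (x₁ + Real.sqrt (δ ^ 2 - y + x₁ ^ 2) - δ) / (2 * (1 - δ))) x₂ :=
        heq3.deriv_eq
      _ = _ := hF.deriv
  have hmain : ∀ Δ₁ Δ₂ : ℝ,
      d11 * Δ₁ ^ 2 + 2 * d12 * Δ₁ * Δ₂ + d22 * Δ₂ ^ 2 =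
        -(((x₁ + g) * Δ₁ - (1 / 2) * Δ₂) ^ 2 / (g * (1 - δ))) * E := by
    intro Δ₁ Δ₂
    rw [e11, e12, e22]
    field_simp
    ring
  refine ⟨hmain, fun Δ₁ Δ₂ => ?_, ?_⟩
  · rw [hmain Δ₁ Δ₂]
    have h1 : 0 ≤ ((x₁ + g) * Δ₁ - (1 / 2) * Δ₂) ^ 2 / (g * (1 - δ)) :=
      div_nonneg (sq_nonneg _) (by positivity)
    have h2 := mul_nonneg h1 (Real.exp_pos (x₁ + g - δ)).le
    rw [hEdef]
    nlinarith [h2]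
  · rw [e11, e12, e22]
    field_simp
    ring
end

section
/- Let g: [0,ε²] → ℝ be twice differentiable with g(0) = 0 and satisfy g'' - 2g'g'' - 2(g')³ = 0 with g' never zero. Then there is a constant δ with 1 - 1/(2g'(t)) = ±√(δ² - t) for all t, and consequently g(t) = log((1 ∓ √(δ²-t))/(1 ∓ δ)) ± √(δ²-t) ∓ δ (with consistent sign choice). -/
theorem JN_ODE_solution (ε : ℝ) (hε : 0 < ε) (g g' g'' : ℝ → ℝ)
    (hg : ∀ t ∈ Set.Icc (0:ℝ) (ε ^ 2), HasDerivAt g (g' t) t)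
    (hg' : ∀ t ∈ Set.Icc (0:ℝ) (ε ^ 2), HasDerivAt g' (g'' t) t)
    (hg0 : g 0 = 0)
    (hODE : ∀ t ∈ Set.Icc (0:ℝ) (ε ^ 2),
      g'' t - 2 * g' t * g'' t - 2 * (g' t) ^ 3 = 0)
    (hne : ∀ t ∈ Set.Icc (0:ℝ) (ε ^ 2), g' t ≠ 0) :
    ∃ δ : ℝ, ∃ s : ℝ, (s = 1 ∨ s = -1) ∧
      ∀ t ∈ Set.Icc (0:ℝ) (ε ^ 2),
        1 - 1 / (2 * g' t) = s * Real.sqrt (δ ^ 2 - t) ∧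
        g t = Real.log ((1 - s * Real.sqrt (δ ^ 2 - t)) / (1 - s * δ)) +
          s * Real.sqrt (δ ^ 2 - t) - s * δ := by
  have h0I : (0:ℝ) ∈ Set.Icc (0:ℝ) (ε^2) := ⟨le_refl _, by positivity⟩
  have hεI : ε^2 ∈ Set.Icc (0:ℝ) (ε^2) := ⟨by positivity, le_refl _⟩
  set u : ℝ → ℝ := fun t => 1 - 1/(2 * g' t) with hudef
  -- derivative of u
  have hu' : ∀ t ∈ Set.Icc (0:ℝ) (ε^2),
      HasDerivAt u (g'' t / (2 * (g' t)^2)) t := by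
    intro t ht
    have hne' : 2 * g' t ≠ 0 := by
      have := hne t ht; intro h; apply this; linarith [mul_eq_zero.mp h]
    have h1 : HasDerivAt (fun x => 2 * g' x) (2 * g'' t) t :=
      (hg' t ht).const_mul 2
    have h2 := ((hasDerivAt_const t (1:ℝ)).div h1 hne')
    have h3 := (hasDerivAt_const t (1:ℝ)).sub h2
    refine h3.congr_deriv ?_
    have := hne t ht
    field_simp
    ring
  -- continuity of u on Icc
  have hucont : ContinuousOn u (Set.Icc (0:ℝ) (ε^2)) := fun t ht =>
    (hu' t ht).continuousAt.continuousWithinAt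
  -- key: u t ^ 2 + t = u 0 ^ 2
  have key : ∀ t ∈ Set.Icc (0:ℝ) (ε^2), u t ^ 2 + t = u 0 ^ 2 := by
    have hc : ContinuousOn (fun t => u t ^ 2 + t) (Set.Icc (0:ℝ) (ε^2)) :=
      (hucont.pow 2).add continuousOn_id
    have hd : ∀ x ∈ Set.Ico (0:ℝ) (ε^2),
        HasDerivWithinAt (fun t => u t ^ 2 + t) 0 (Set.Ici x) x := by
      intro x hx
      have hxI : x ∈ Set.Icc (0:ℝ) (ε^2) := Set.Ico_subset_Icc_self hx
      have h1 := ((hu' x hxI).pow 2).add (hasDerivAt_id x)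
      have h2 : HasDerivAt (fun t => u t ^ 2 + t) 0 x := by
        refine h1.congr_deriv ?_
        have hO := hODE x hxI
        have hne' := hne x hxI
        simp only [hudef]
        push_cast
        field_simp
        ring_nf
        ring_nf at hO
        nlinarith [sq_nonneg (g' x), hO]
      exact h2.hasDerivWithinAt
    intro t ht
    have := constant_of_has_deriv_right_zero hc hd t ht
    simpa using this
  -- u 0 ^ 2 ≥ ε ^ 2 > 0
  have hu0sq : ε ^ 2 ≤ u 0 ^ 2 := by
    have := key (ε^2) hεI
    nlinarith [sq_nonneg (u (ε^2))]
  have hu0ne : u 0 ≠ 0 := by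
    intro h; rw [h] at hu0sq; simp at hu0sq; nlinarith
  set s : ℝ := if 0 < u 0 then 1 else -1 with hsdef
  have hs : s = 1 ∨ s = -1 := by
    by_cases h : 0 < u 0 <;> simp [hsdef, h]
  have hs2 : s ^ 2 = 1 := by rcases hs with h | h <;> rw [h] <;> ring
  have hsu0 : 0 < s * u 0 := by
    by_cases h : 0 < u 0
    · simp only [hsdef, if_pos h]; linarith
    · simp only [hsdef, if_neg h]
      cases' lt_or_eq_of_le (not_lt.mp h) with h' h'
      · linarith
      · exact absurd h' hu0ne
  -- sign is constant
  have hsu : ∀ t ∈ Set.Icc (0:ℝ) (ε^2), 0 ≤ s * u t := by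
    intro t ht
    by_contra hlt
    push_neg at hlt
    have hsub : Set.Icc (0:ℝ) t ⊆ Set.Icc (0:ℝ) (ε^2) :=
      Set.Icc_subset_Icc (le_refl _) ht.2
    have hcont' : ContinuousOn (fun x => s * u x) (Set.Icc 0 t) :=
      (continuousOn_const.mul hucont).mono hsub
    have : (0:ℝ) ∈ (fun x => s * u x) '' Set.Icc (0:ℝ) t := by
      apply intermediate_value_Icc' ht.1 hcont'
      constructor <;> [linarith; linarith]
    obtain ⟨c, hc, hc0⟩ := this
    have hcI : c ∈ Set.Icc (0:ℝ) (ε^2) := hsub hc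
    have huc : u c = 0 := by
      rcases hs with h | h <;> rw [h] at hc0 <;> simpa using hc0
    have hkc := key c hcI
    rw [huc] at hkc
    have hkε := key (ε^2) hεI
    -- c = u 0 ^ 2 ≥ ε ^ 2, and c ≤ t ≤ ε^2, so c = t = ε^2
    have hc_ge : ε ^ 2 ≤ c := by nlinarith
    have hct : c = t := le_antisymm hc.2 (by linarith [ht.2])
    rw [← hct] at hlt
    rw [huc] at hlt
    simp at hlt
  refine ⟨s * u 0, s, hs, ?_⟩
  have hδsq : (s * u 0) ^ 2 = u 0 ^ 2 := by rw [mul_pow, hs2, one_mul]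
  have hsδ : s * (s * u 0) = u 0 := by rw [← mul_assoc, ← sq, hs2, one_mul]
  -- main pointwise sqrt identity
  have hsqrt : ∀ t ∈ Set.Icc (0:ℝ) (ε^2),
      u t = s * Real.sqrt ((s * u 0) ^ 2 - t) := by
    intro t ht
    have hk := key t ht
    have : (s * u 0) ^ 2 - t = (u t) ^ 2 := by rw [hδsq]; linarith
    rw [this, Real.sqrt_sq_eq_abs]
    have h1 : |u t| = s * u t := by
      rw [abs_eq (hsu t ht)]
      rcases hs with h | h <;> rw [h] <;> [left; right] <;> ring
    rw [h1, ← mul_assoc, ← sq, hs2, one_mul]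
  -- nonvanishing facts
  have h1u : ∀ t ∈ Set.Icc (0:ℝ) (ε^2), 1 - u t = 1 / (2 * g' t) := by
    intro t ht; simp [hudef]
  have h1une : ∀ t ∈ Set.Icc (0:ℝ) (ε^2), 1 - u t ≠ 0 := by
    intro t ht
    rw [h1u t ht]
    have := hne t ht
    positivity
  -- the formula for g
  have hG : ∀ t ∈ Set.Icc (0:ℝ) (ε^2),
      g t = Real.log ((1 - u t) / (1 - u 0)) + u t - u 0 := by
    have hc : ContinuousOn
        (fun t => g t - (Real.log ((1 - u t) / (1 - u 0)) + u t))
        (Set.Icc (0:ℝ) (ε^2)) := by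
      apply ContinuousOn.sub
      · exact fun t ht => (hg t ht).continuousAt.continuousWithinAt
      apply ContinuousOn.add
      · apply ContinuousOn.log
        · exact ((continuousOn_const.sub hucont)).div_const _
        · intro t ht
          exact div_ne_zero (h1une t ht) (h1une 0 h0I)
      · exact hucont
    have hd : ∀ x ∈ Set.Ico (0:ℝ) (ε^2),
        HasDerivWithinAt
          (fun t => g t - (Real.log ((1 - u t) / (1 - u 0)) + u t)) 0
          (Set.Ici x) x := by
      intro x hx
      have hxI : x ∈ Set.Icc (0:ℝ) (ε^2) := Set.Ico_subset_Icc_self hx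
      have hx1 : HasDerivAt (fun t => (1 - u t) / (1 - u 0))
          (-(g'' x / (2 * (g' x)^2)) / (1 - u 0)) x := by
        have := ((hasDerivAt_const x (1:ℝ)).sub (hu' x hxI)).div_const (1 - u 0)
        refine this.congr_deriv ?_; ring
      have hxlog := hx1.log (div_ne_zero (h1une x hxI) (h1une 0 h0I))
      have hD := (hg x hxI).sub (hxlog.add (hu' x hxI))
      have heq : g' x - ((-(g'' x / (2 * (g' x)^2)) / (1 - u 0)) /
          ((1 - u x) / (1 - u 0)) + g'' x / (2 * (g' x)^2)) = 0 := by
        have hO := hODE x hxI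
        have hgne := hne x hxI
        have hg0ne := hne 0 h0I
        simp only [hudef]
        field_simp
        linear_combination (-1) * hO
      rw [heq] at hD
      exact hD.hasDerivWithinAt
    intro t ht
    have := constant_of_has_deriv_right_zero hc hd t ht
    simp only [hg0] at this
    have h0 : Real.log ((1 - u 0) / (1 - u 0)) = 0 := by
      rw [div_self (h1une 0 h0I), Real.log_one]
    rw [h0] at this
    linarith
  intro t ht
  have h1 := hsqrt t ht
  refine ⟨by rw [← h1], ?_⟩
  have h2 := hG t ht
  rw [← h1, hsδ]
  exact h2
end

section
/- Define B̃(x₁,x₂) = (√x₂ + √(x₂ - x₁²))² on the domain {x₁ > 0, x₂ > x₁²}. Then B̃_{x₁x₁} < 0 and B̃_{x₁x₁}B̃_{x₂x₂} - (B̃_{x₁x₂})² = x₁⁴/(x₂(x₂-x₁²)²) + x₁⁴/(x₂^{3/2}(x₂-x₁²)^{3/2}) > 0; consequently B̃ is locally concave on this domain. -/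
/-- The extended maximal-operator Bellman function `B̃(x) = (√x₂ + √(x₂ - x₁²))²`. -/
noncomputable def MBt (x₁ x₂ : ℝ) : ℝ :=
  (Real.sqrt x₂ + Real.sqrt (x₂ - x₁ ^ 2)) ^ 2

lemma MBt_hasDerivAt_fst (y t : ℝ) (h : 0 < y - t ^ 2) :
    HasDerivAt (fun t => MBt t y)
      (-2 * t - 2 * Real.sqrt y * t / Real.sqrt (y - t ^ 2)) t := by
  have hb : (0:ℝ) < Real.sqrt (y - t ^ 2) := Real.sqrt_pos.mpr h
  have h1 : HasDerivAt (fun t : ℝ => y - t ^ 2) (-(2 * t)) t := by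
    simpa using ((hasDerivAt_pow 2 t).const_sub y)
  have h4 := ((h1.sqrt (ne_of_gt h)).const_add (Real.sqrt y)).pow 2
  refine h4.congr_deriv (Eq.symm ?_)
  field_simp
  ring

lemma MBt_hasDerivAt_snd (t y : ℝ) (hy : 0 < y) (h : 0 < y - t ^ 2) :
    HasDerivAt (fun y => MBt t y)
      ((Real.sqrt y + Real.sqrt (y - t ^ 2)) *
        ((Real.sqrt y)⁻¹ + (Real.sqrt (y - t ^ 2))⁻¹)) y := by
  have ha : (0:ℝ) < Real.sqrt y := Real.sqrt_pos.mpr hy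
  have hb : (0:ℝ) < Real.sqrt (y - t ^ 2) := Real.sqrt_pos.mpr h
  have h1 : HasDerivAt (fun y : ℝ => y - t ^ 2) 1 y := by
    simpa using (hasDerivAt_id y).sub_const (t ^ 2)
  have h4 := ((Real.hasDerivAt_sqrt (ne_of_gt hy)).add (h1.sqrt (ne_of_gt h))).pow 2
  refine h4.congr_deriv (Eq.symm ?_)
  simp only [Pi.add_apply]
  field_simp
  ring

lemma aux11 (y s : ℝ) (h : 0 < y - s ^ 2) :
    HasDerivAt (fun s => -2 * s - 2 * Real.sqrt y * s / Real.sqrt (y - s ^ 2))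
      (-2 - 2 * Real.sqrt y * (1 / Real.sqrt (y - s ^ 2)
        + s ^ 2 / Real.sqrt (y - s ^ 2) ^ 3)) s := by
  have hb : (0:ℝ) < Real.sqrt (y - s ^ 2) := Real.sqrt_pos.mpr h
  have hb2 : Real.sqrt (y - s ^ 2) ^ 2 = y - s ^ 2 := Real.sq_sqrt h.le
  have h1 : HasDerivAt (fun s : ℝ => y - s ^ 2) (-(2 * s)) s := by
    simpa using ((hasDerivAt_pow 2 s).const_sub y)
  have hnum : HasDerivAt (fun s : ℝ => 2 * Real.sqrt y * s) (2 * Real.sqrt y) s := by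
    simpa using (hasDerivAt_id s).const_mul (2 * Real.sqrt y)
  have hden := h1.sqrt (ne_of_gt h)
  have hdiv := hnum.div hden (ne_of_gt hb)
  have hlin : HasDerivAt (fun s : ℝ => -2 * s) (-2) s := by
    simpa using (hasDerivAt_id s).const_mul (-2 : ℝ)
  have h4 := hlin.sub hdiv
  refine h4.congr_deriv (Eq.symm ?_)
  field_simp
  ring

lemma aux12 (t y : ℝ) (hy : 0 < y) (h : 0 < y - t ^ 2) :
    HasDerivAt (fun y => -2 * t - 2 * Real.sqrt y * t / Real.sqrt (y - t ^ 2))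
      (t ^ 3 / (Real.sqrt y * Real.sqrt (y - t ^ 2) ^ 3)) y := by
  have ha : (0:ℝ) < Real.sqrt y := Real.sqrt_pos.mpr hy
  have hb : (0:ℝ) < Real.sqrt (y - t ^ 2) := Real.sqrt_pos.mpr h
  have ha2 : Real.sqrt y ^ 2 = y := Real.sq_sqrt hy.le
  have hb2 : Real.sqrt (y - t ^ 2) ^ 2 = y - t ^ 2 := Real.sq_sqrt h.le
  have h1 : HasDerivAt (fun y : ℝ => y - t ^ 2) 1 y := by
    simpa using (hasDerivAt_id y).sub_const (t ^ 2)
  have hnum : HasDerivAt (fun y : ℝ => 2 * Real.sqrt y * t)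
      (2 * (1 / (2 * Real.sqrt y)) * t) y :=
    ((Real.hasDerivAt_sqrt (ne_of_gt hy)).const_mul 2).mul_const t
  have hden := h1.sqrt (ne_of_gt h)
  have hdiv := hnum.div hden (ne_of_gt hb)
  have h4 := (hasDerivAt_const y (-2 * t)).sub hdiv
  refine h4.congr_deriv (Eq.symm ?_)
  field_simp
  linear_combination (-t) * ha2 + t * hb2

lemma aux22 (t y : ℝ) (hy : 0 < y) (h : 0 < y - t ^ 2) :
    HasDerivAt (fun y => (Real.sqrt y + Real.sqrt (y - t ^ 2)) *
        ((Real.sqrt y)⁻¹ + (Real.sqrt (y - t ^ 2))⁻¹))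
      (-(t ^ 4) / (2 * Real.sqrt y ^ 3 * Real.sqrt (y - t ^ 2) ^ 3)) y := by
  have ha : (0:ℝ) < Real.sqrt y := Real.sqrt_pos.mpr hy
  have hb : (0:ℝ) < Real.sqrt (y - t ^ 2) := Real.sqrt_pos.mpr h
  have ha2 : Real.sqrt y ^ 2 = y := Real.sq_sqrt hy.le
  have hb2 : Real.sqrt (y - t ^ 2) ^ 2 = y - t ^ 2 := Real.sq_sqrt h.le
  have h1 : HasDerivAt (fun y : ℝ => y - t ^ 2) 1 y := by
    simpa using (hasDerivAt_id y).sub_const (t ^ 2)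
  have hu := (Real.hasDerivAt_sqrt (ne_of_gt hy)).add (h1.sqrt (ne_of_gt h))
  have hv := ((Real.hasDerivAt_sqrt (ne_of_gt hy)).inv (ne_of_gt ha)).add
    ((h1.sqrt (ne_of_gt h)).inv (ne_of_gt hb))
  have h4 := hu.mul hv
  refine h4.congr_deriv (Eq.symm ?_)
  simp only [Pi.add_apply, Pi.inv_apply]
  set a := Real.sqrt y with hadef
  set b := Real.sqrt (y - t ^ 2) with hbdef
  have ht2 : t ^ 2 = a ^ 2 - b ^ 2 := by rw [ha2, hb2]; ring
  rw [show t ^ 4 = (a ^ 2 - b ^ 2) ^ 2 from by rw [← ht2]; ring]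
  field_simp
  ring

theorem MBt_concave (x₁ x₂ : ℝ) (hx₁ : 0 < x₁) (hx₂ : x₁ ^ 2 < x₂) :
    let d1 : ℝ → ℝ → ℝ := fun s y => deriv (fun t => MBt t y) s
    let d11 : ℝ := deriv (fun s => d1 s x₂) x₁
    let d12 : ℝ := deriv (fun y => d1 x₁ y) x₂
    let d22 : ℝ := deriv (fun y => deriv (fun t => MBt x₁ t) y) x₂
    d11 < 0 ∧
    d11 * d22 - d12 ^ 2 =
      x₁ ^ 4 / (x₂ * (x₂ - x₁ ^ 2) ^ 2) +
        x₁ ^ 4 / (x₂ ^ ((3:ℝ)/2) * (x₂ - x₁ ^ 2) ^ ((3:ℝ)/2)) ∧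
    0 < d11 * d22 - d12 ^ 2 ∧
    (∀ Δ₁ Δ₂ : ℝ, d11 * Δ₁ ^ 2 + 2 * d12 * Δ₁ * Δ₂ + d22 * Δ₂ ^ 2 ≤ 0) := by
  intro d1 d11 d12 d22
  have hx2pos : (0:ℝ) < x₂ := lt_trans (by positivity) hx₂
  have hsub : (0:ℝ) < x₂ - x₁ ^ 2 := by linarith
  set a := Real.sqrt x₂ with hadef
  set b := Real.sqrt (x₂ - x₁ ^ 2) with hbdef
  have ha : (0:ℝ) < a := Real.sqrt_pos.mpr hx2pos
  have hb : (0:ℝ) < b := Real.sqrt_pos.mpr hsub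
  have ha2 : a ^ 2 = x₂ := Real.sq_sqrt hx2pos.le
  have hb2 : b ^ 2 = x₂ - x₁ ^ 2 := Real.sq_sqrt hsub.le
  -- the first partial derivative
  have hd1 : ∀ s y : ℝ, 0 < y - s ^ 2 →
      d1 s y = -2 * s - 2 * Real.sqrt y * s / Real.sqrt (y - s ^ 2) := by
    intro s y h
    exact (MBt_hasDerivAt_fst y s h).deriv
  -- d11
  have hd11 : d11 = -2 - 2 * a * (1 / b + x₁ ^ 2 / b ^ 3) := by
    have hev : (fun s => d1 s x₂) =ᶠ[nhds x₁]
        (fun s => -2 * s - 2 * Real.sqrt x₂ * s / Real.sqrt (x₂ - s ^ 2)) := by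
      have h0 : ∀ᶠ s in nhds x₁, s ^ 2 < x₂ :=
        ContinuousAt.eventually_lt (by fun_prop) (by fun_prop) hx₂
      exact h0.mono fun s hs => hd1 s x₂ (by linarith)
    show deriv (fun s => d1 s x₂) x₁ = _
    rw [hev.deriv_eq, (aux11 x₂ x₁ hsub).deriv]
  -- d12
  have hd12 : d12 = x₁ ^ 3 / (a * b ^ 3) := by
    have hev : (fun y => d1 x₁ y) =ᶠ[nhds x₂]
        (fun y => -2 * x₁ - 2 * Real.sqrt y * x₁ / Real.sqrt (y - x₁ ^ 2)) := by
      have h0 : ∀ᶠ y in nhds x₂, x₁ ^ 2 < y := eventually_gt_nhds hx₂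
      exact h0.mono fun y hy => hd1 x₁ y (by linarith)
    show deriv (fun y => d1 x₁ y) x₂ = _
    rw [hev.deriv_eq, (aux12 x₁ x₂ hx2pos hsub).deriv]
  -- d22
  have hd22 : d22 = -(x₁ ^ 4) / (2 * a ^ 3 * b ^ 3) := by
    have hev : (fun y => deriv (fun t => MBt x₁ t) y) =ᶠ[nhds x₂]
        (fun y => (Real.sqrt y + Real.sqrt (y - x₁ ^ 2)) *
          ((Real.sqrt y)⁻¹ + (Real.sqrt (y - x₁ ^ 2))⁻¹)) := by
      have h0 : ∀ᶠ y in nhds x₂, x₁ ^ 2 < y := eventually_gt_nhds hx₂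
      refine h0.mono fun y hy => ?_
      have hy0 : (0:ℝ) < y := lt_trans (by positivity) hy
      exact (MBt_hasDerivAt_snd x₁ y hy0 (by linarith)).deriv
    show deriv (fun y => deriv (fun t => MBt x₁ t) y) x₂ = _
    rw [hev.deriv_eq, (aux22 x₁ x₂ hx2pos hsub).deriv]
  -- rpow facts
  have hrp1 : x₂ ^ ((3:ℝ)/2) = a ^ 3 := by
    rw [hadef, show ((3:ℝ)/2) = (1/2 : ℝ) * (3:ℕ) by norm_num,
      Real.rpow_mul hx2pos.le, Real.rpow_natCast, Real.sqrt_eq_rpow]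
  have hrp2 : (x₂ - x₁ ^ 2) ^ ((3:ℝ)/2) = b ^ 3 := by
    rw [hbdef, show ((3:ℝ)/2) = (1/2 : ℝ) * (3:ℕ) by norm_num,
      Real.rpow_mul hsub.le, Real.rpow_natCast, Real.sqrt_eq_rpow]
  -- conclusion 1
  have c1 : d11 < 0 := by
    rw [hd11]
    have : 0 < 2 * a * (1 / b + x₁ ^ 2 / b ^ 3) := by positivity
    linarith
  -- conclusion 2
  have c2 : d11 * d22 - d12 ^ 2 =
      x₁ ^ 4 / (x₂ * (x₂ - x₁ ^ 2) ^ 2) +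
        x₁ ^ 4 / (x₂ ^ ((3:ℝ)/2) * (x₂ - x₁ ^ 2) ^ ((3:ℝ)/2)) := by
    rw [hd11, hd12, hd22, hrp1, hrp2, ← hb2, ← ha2]
    field_simp
    ring
  -- conclusion 3
  have c3 : 0 < d11 * d22 - d12 ^ 2 := by
    rw [c2]
    have h1 : (0:ℝ) < x₂ ^ ((3:ℝ)/2) := Real.rpow_pos_of_pos hx2pos _
    have h2 : (0:ℝ) < (x₂ - x₁ ^ 2) ^ ((3:ℝ)/2) := Real.rpow_pos_of_pos hsub _
    positivity
  refine ⟨c1, c2, c3, ?_⟩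
  intro Δ₁ Δ₂
  nlinarith [sq_nonneg (d11 * Δ₁ + d12 * Δ₂), mul_nonneg c3.le (sq_nonneg Δ₂), c1]
end

section
/- The concave function bound implies the sharp L² maximal inequality: if for every w ∈ L²(ℝ), w ≥ 0, and every dyadic interval J one has ⟨(Mw)²⟩_J ≤ (√(⟨w²⟩_J) + √(⟨w²⟩_J - L(2⟨w⟩_J - L)))² where L = sup_{I ⊇ J dyadic} ⟨w⟩_I (valid when ⟨w⟩_J ≥ L/2), together with the bound 4(⟨w²⟩_J - ⟨w⟩_J²)+L² otherwise, then ‖Mw‖_{L²(ℝ)} ≤ 2‖w‖_{L²(ℝ)} for every nonnegative w ∈ L²(ℝ), where (Mw)(t) = sup{⟨w⟩_I : I dyadic, t ∈ I}. -/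
open MeasureTheory
open scoped ENNReal

/-- The dyadic interval `[k·2ⁿ, (k+1)·2ⁿ)`. -/
noncomputable def dyad (n k : ℤ) : Set ℝ :=
  Set.Ico ((k : ℝ) * 2 ^ n) (((k : ℝ) + 1) * 2 ^ n)

/-- Average of `w` over the dyadic interval `dyad n k`. -/
noncomputable def davg (w : ℝ → ℝ) (n k : ℤ) : ℝ :=
  ((2:ℝ) ^ n)⁻¹ * ∫ t in dyad n k, w t

/-- The dyadic maximal function. -/
noncomputable def dyadMax (w : ℝ → ℝ) (t : ℝ) : ℝ :=
  sSup {y : ℝ | ∃ n k : ℤ, t ∈ dyad n k ∧ y = davg w n k}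

/-- `L = sup` of the averages of `w` over dyadic intervals containing `dyad n k`. -/
noncomputable def dyadSupAbove (w : ℝ → ℝ) (n k : ℤ) : ℝ :=
  sSup {y : ℝ | ∃ m j : ℤ, dyad n k ⊆ dyad m j ∧ y = davg w m j}

lemma two_zpow_pos (n : ℤ) : (0:ℝ) < 2 ^ n := zpow_pos (by norm_num) n

lemma measurableSet_dyad (n k : ℤ) : MeasurableSet (dyad n k) := measurableSet_Ico

lemma volume_dyad (n k : ℤ) : volume (dyad n k) = ENNReal.ofReal ((2:ℝ) ^ n) := by
  rw [dyad, Real.volume_Ico]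
  congr 1
  ring

lemma isFiniteMeasure_restrict (n k : ℤ) :
    IsFiniteMeasure (volume.restrict (dyad n k)) := by
  constructor
  rw [Measure.restrict_apply_univ, volume_dyad]
  exact ENNReal.ofReal_lt_top

lemma exists_mem_dyad (t : ℝ) : ∃ n k : ℤ, t ∈ dyad n k := by
  refine ⟨0, ⌊t⌋, ?_, ?_⟩ <;> simp [Int.floor_le, Int.lt_floor_add_one]

lemma davg_nonneg {w : ℝ → ℝ} (hw : ∀ t, 0 ≤ w t) (n k : ℤ) : 0 ≤ davg w n k :=
  mul_nonneg (inv_nonneg.mpr (two_zpow_pos n).le) (integral_nonneg fun t => hw t)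

lemma davg_le {v : ℝ → ℝ} {C : ℝ} (hC : 0 ≤ C) (hvC : ∀ t, v t ≤ C)
    (n k : ℤ) (hvi : IntegrableOn v (dyad n k) volume) : davg v n k ≤ C := by
  haveI := isFiniteMeasure_restrict n k
  have h1 : ∫ t in dyad n k, v t ≤ ∫ _t in dyad n k, C :=
    integral_mono hvi (integrable_const C) (fun t => hvC t)
  rw [integral_const, measureReal_def, Measure.restrict_apply_univ, volume_dyad,
    ENNReal.toReal_ofReal (two_zpow_pos n).le, smul_eq_mul] at h1
  have h2 : davg v n k ≤ ((2:ℝ)^n)⁻¹ * ((2:ℝ)^n * C) :=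
    mul_le_mul_of_nonneg_left h1 (inv_nonneg.mpr (two_zpow_pos n).le)
  rwa [inv_mul_cancel_left₀ (two_zpow_pos n).ne'] at h2

lemma scale_le_of_subset {n k m j : ℤ} (h : dyad n k ⊆ dyad m j) : (2:ℝ)^n ≤ 2^m := by
  have h2 := measure_mono (μ := volume) h
  rw [volume_dyad, volume_dyad] at h2
  exact (ENNReal.ofReal_le_ofReal_iff (two_zpow_pos m).le).mp h2

noncomputable def EE (w : ℝ → ℝ) (t : ℝ) : ℝ≥0∞ :=
  ⨆ p : ℤ × ℤ, (dyad p.1 p.2).indicator (fun _ => ENNReal.ofReal (davg w p.1 p.2)) t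

lemma measurable_EE (w : ℝ → ℝ) : Measurable (EE w) := by
  apply Measurable.iSup
  intro p
  exact Measurable.indicator measurable_const (measurableSet_dyad p.1 p.2)

lemma le_EE {w : ℝ → ℝ} {t : ℝ} {n k : ℤ} (h : t ∈ dyad n k) :
    ENNReal.ofReal (davg w n k) ≤ EE w t := by
  refine le_iSup_of_le (n, k) ?_
  rw [Set.indicator_of_mem h]

lemma ofReal_dyadMax_le_EE {w : ℝ → ℝ} (hw : ∀ t, 0 ≤ w t) (t : ℝ) :
    ENNReal.ofReal (dyadMax w t) ≤ EE w t := by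
  by_cases hb : BddAbove {y : ℝ | ∃ n k : ℤ, t ∈ dyad n k ∧ y = davg w n k}
  · by_cases htop : EE w t = ⊤
    · rw [htop]; exact le_top
    · rw [← ENNReal.ofReal_toReal htop]
      apply ENNReal.ofReal_le_ofReal
      apply Real.sSup_le _ ENNReal.toReal_nonneg
      rintro y ⟨n, k, ht, rfl⟩
      have h1 : ENNReal.ofReal (davg w n k) ≤ EE w t := le_EE ht
      have h2 := ENNReal.toReal_mono htop h1
      rwa [ENNReal.toReal_ofReal (davg_nonneg hw n k)] at h2
  · rw [dyadMax, Real.sSup_of_not_bddAbove hb]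
    simp

lemma bddAbove_dyadMaxSet {w : ℝ → ℝ} {C : ℝ} (hbnd : ∀ n k : ℤ, davg w n k ≤ C) (t : ℝ) :
    BddAbove {y : ℝ | ∃ n k : ℤ, t ∈ dyad n k ∧ y = davg w n k} := by
  refine ⟨C, ?_⟩
  rintro y ⟨n, k, _, rfl⟩
  exact hbnd n k

lemma dyadMax_nonneg {w : ℝ → ℝ} (hw : ∀ t, 0 ≤ w t) (t : ℝ) : 0 ≤ dyadMax w t := by
  by_cases hb : BddAbove {y : ℝ | ∃ n k : ℤ, t ∈ dyad n k ∧ y = davg w n k}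
  · obtain ⟨n, k, ht⟩ := exists_mem_dyad t
    exact le_trans (davg_nonneg hw n k) (le_csSup hb ⟨n, k, ht, rfl⟩)
  · rw [dyadMax, Real.sSup_of_not_bddAbove hb]

lemma EE_eq_ofReal_dyadMax {w : ℝ → ℝ} {C : ℝ} (hw : ∀ t, 0 ≤ w t)
    (hbnd : ∀ n k : ℤ, davg w n k ≤ C) (t : ℝ) :
    EE w t = ENNReal.ofReal (dyadMax w t) := by
  refine le_antisymm ?_ (ofReal_dyadMax_le_EE hw t)
  apply iSup_le
  intro p
  by_cases ht : t ∈ dyad p.1 p.2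
  · rw [Set.indicator_of_mem ht]
    exact ENNReal.ofReal_le_ofReal
      (le_csSup (bddAbove_dyadMaxSet hbnd t) ⟨p.1, p.2, ht, rfl⟩)
  · rw [Set.indicator_of_notMem ht]
    exact zero_le

lemma dyadMax_le {w : ℝ → ℝ} {C : ℝ} (hC : 0 ≤ C)
    (hbnd : ∀ n k : ℤ, davg w n k ≤ C) (t : ℝ) : dyadMax w t ≤ C := by
  apply Real.sSup_le _ hC
  rintro y ⟨n, k, _, rfl⟩
  exact hbnd n k

lemma measurable_dyadMax {w : ℝ → ℝ} {C : ℝ} (hw : ∀ t, 0 ≤ w t)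
    (hbnd : ∀ n k : ℤ, davg w n k ≤ C) : Measurable (dyadMax w) := by
  have : dyadMax w = fun t => (EE w t).toReal := by
    funext t
    rw [EE_eq_ofReal_dyadMax hw hbnd, ENNReal.toReal_ofReal (dyadMax_nonneg hw t)]
  rw [this]
  exact (measurable_EE w).ennreal_toReal

noncomputable def trunc (w : ℝ → ℝ) (N : ℕ) : ℝ → ℝ :=
  fun t => if t ∈ Set.Icc (-(N:ℝ)) (N:ℝ) then min (w t) N else 0

lemma trunc_nonneg {w : ℝ → ℝ} (hw : ∀ t, 0 ≤ w t) (N : ℕ) (t : ℝ) : 0 ≤ trunc w N t := by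
  unfold trunc
  split
  · exact le_min (hw t) (Nat.cast_nonneg N)
  · exact le_refl 0

lemma trunc_le_self {w : ℝ → ℝ} (hw : ∀ t, 0 ≤ w t) (N : ℕ) (t : ℝ) : trunc w N t ≤ w t := by
  unfold trunc
  split
  · exact min_le_left _ _
  · exact hw t

lemma trunc_le_nat {w : ℝ → ℝ} (N : ℕ) (t : ℝ) : trunc w N t ≤ (N : ℝ) := by
  unfold trunc
  split
  · exact min_le_right _ _
  · exact Nat.cast_nonneg N

lemma trunc_mono {w : ℝ → ℝ} (hw : ∀ t, 0 ≤ w t) (t : ℝ) :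
    Monotone fun N => trunc w N t := by
  intro a b hab
  unfold trunc
  by_cases ha : t ∈ Set.Icc (-(a:ℝ)) (a:ℝ)
  · have hb : t ∈ Set.Icc (-(b:ℝ)) (b:ℝ) := by
      obtain ⟨h1, h2⟩ := ha
      have : (a:ℝ) ≤ b := Nat.cast_le.mpr hab
      exact ⟨by linarith, by linarith⟩
    simp only [if_pos ha, if_pos hb]
    exact min_le_min le_rfl (Nat.cast_le.mpr hab)
  · simp only [if_neg ha]
    exact trunc_nonneg hw b t

lemma trunc_tendsto {w : ℝ → ℝ} (hw : ∀ t, 0 ≤ w t) (t : ℝ) :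
    Filter.Tendsto (fun N => trunc w N t) Filter.atTop (nhds (w t)) := by
  obtain ⟨M, hM⟩ := exists_nat_ge (max |t| (w t))
  apply tendsto_atTop_of_eventually_const (i₀ := M)
  intro N hN
  have hMN : (M : ℝ) ≤ N := Nat.cast_le.mpr hN
  have h1 : |t| ≤ (N : ℝ) := le_trans (le_trans (le_max_left _ _) hM) hMN
  have h2 : w t ≤ (N : ℝ) := le_trans (le_trans (le_max_right _ _) hM) hMN
  rw [trunc, if_pos, min_eq_left h2]
  exact ⟨neg_le_of_abs_le h1, le_of_abs_le h1⟩

lemma trunc_aesm {w : ℝ → ℝ} (hw : AEStronglyMeasurable w volume) (N : ℕ) :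
    AEStronglyMeasurable (trunc w N) volume := by
  have : trunc w N = (Set.Icc (-(N:ℝ)) (N:ℝ)).indicator (fun t => min (w t) N) := by
    funext t
    unfold trunc
    by_cases h : t ∈ Set.Icc (-(N:ℝ)) (N:ℝ) <;> simp [h, Set.indicator_of_mem, Set.indicator_of_notMem]
  rw [this]
  exact (hw.aemeasurable.min aemeasurable_const).aestronglyMeasurable.indicator measurableSet_Icc

lemma trunc_integrable {w : ℝ → ℝ} (hw : ∀ t, 0 ≤ w t)
    (hsm : AEStronglyMeasurable w volume) (N : ℕ) : Integrable (trunc w N) volume := by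
  refine Integrable.mono' (g := (Set.Icc (-(N:ℝ)) (N:ℝ)).indicator fun _ => (N:ℝ))
    ?_ (trunc_aesm hsm N) ?_
  · rw [integrable_indicator_iff measurableSet_Icc]
    exact integrableOn_const measure_Icc_lt_top.ne
  · filter_upwards with t
    rw [Real.norm_eq_abs, abs_of_nonneg (trunc_nonneg hw N t)]
    unfold trunc
    by_cases h : t ∈ Set.Icc (-(N:ℝ)) (N:ℝ)
    · rw [if_pos h, Set.indicator_of_mem h]
      exact min_le_right _ _
    · rw [if_neg h, Set.indicator_of_notMem h]

lemma trunc_sq_integrable {w : ℝ → ℝ} (hw : ∀ t, 0 ≤ w t)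
    (hsm : AEStronglyMeasurable w volume) (N : ℕ) :
    Integrable (fun t => trunc w N t ^ 2) volume := by
  refine Integrable.mono' (g := fun t => (N:ℝ) * trunc w N t)
    ((trunc_integrable hw hsm N).const_mul _) ?_ ?_
  · exact ((trunc_aesm hsm N).pow 2)
  · filter_upwards with t
    rw [Real.norm_eq_abs, sq, abs_of_nonneg (mul_nonneg (trunc_nonneg hw N t) (trunc_nonneg hw N t))]
    exact mul_le_mul_of_nonneg_right (trunc_le_nat N t) (trunc_nonneg hw N t)

lemma trunc_memLp {w : ℝ → ℝ} (hw : ∀ t, 0 ≤ w t) (hw2 : MemLp w 2 volume) (N : ℕ) :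
    MemLp (trunc w N) 2 volume := by
  refine hw2.mono (trunc_aesm hw2.aestronglyMeasurable N) ?_
  filter_upwards with t
  rw [Real.norm_eq_abs, Real.norm_eq_abs, abs_of_nonneg (trunc_nonneg hw N t),
    abs_of_nonneg (hw t)]
  exact trunc_le_self hw N t

lemma bellman_le {x₁ x₂ L : ℝ} (h1 : 0 ≤ x₁) (h2 : 0 ≤ x₂) (hL : 0 ≤ L) :
    (if L / 2 ≤ x₁ then (Real.sqrt x₂ + Real.sqrt (x₂ - L * (2 * x₁ - L))) ^ 2
      else 4 * (x₂ - x₁ ^ 2) + L ^ 2) ≤ 4 * x₂ + L ^ 2 := by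
  split
  · rename_i hc
    have ha : Real.sqrt (x₂ - L * (2 * x₁ - L)) ≤ Real.sqrt x₂ := by
      apply Real.sqrt_le_sqrt
      nlinarith
    have hb : Real.sqrt x₂ ^ 2 = x₂ := Real.sq_sqrt h2
    have hc1 : 0 ≤ Real.sqrt x₂ := Real.sqrt_nonneg _
    have hc2 : 0 ≤ Real.sqrt (x₂ - L * (2 * x₁ - L)) := Real.sqrt_nonneg _
    nlinarith [sq_nonneg L]
  · nlinarith [sq_nonneg x₁]

lemma dyadSupAbove_nonneg {v : ℝ → ℝ} (hv : ∀ t, 0 ≤ v t) {B : ℝ}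
    (hB : ∀ m j : ℤ, davg v m j ≤ B) (n k : ℤ) : 0 ≤ dyadSupAbove v n k := by
  refine le_trans (davg_nonneg hv n k) (le_csSup ⟨B, ?_⟩ ⟨n, k, subset_rfl, rfl⟩)
  rintro y ⟨m, j, _, rfl⟩
  exact hB m j

lemma dyadSupAbove_le {v : ℝ → ℝ} (hv : ∀ t, 0 ≤ v t) (hvI : Integrable v volume)
    (n k : ℤ) : dyadSupAbove v n k ≤ ((2:ℝ)^n)⁻¹ * ∫ t, v t := by
  have hBnn : 0 ≤ ∫ t, v t := integral_nonneg hv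
  apply Real.sSup_le _ (mul_nonneg (inv_nonneg.mpr (two_zpow_pos n).le) hBnn)
  rintro y ⟨m, j, hsub, rfl⟩
  have h1 : ∫ t in dyad m j, v t ≤ ∫ t, v t :=
    setIntegral_le_integral hvI (Filter.Eventually.of_forall hv)
  have h2 : ((2:ℝ)^m)⁻¹ ≤ ((2:ℝ)^n)⁻¹ :=
    inv_anti₀ (two_zpow_pos n) (scale_le_of_subset hsub)
  calc davg v m j ≤ ((2:ℝ)^m)⁻¹ * ∫ t, v t :=
        mul_le_mul_of_nonneg_left h1 (inv_nonneg.mpr (two_zpow_pos m).le)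
    _ ≤ ((2:ℝ)^n)⁻¹ * ∫ t, v t := mul_le_mul_of_nonneg_right h2 hBnn

lemma setIntegral_eq_davg (w : ℝ → ℝ) (n k : ℤ) :
    ∫ t in dyad n k, w t = 2^n * davg w n k := by
  rw [davg, ← mul_assoc, mul_inv_cancel₀ (two_zpow_pos n).ne', one_mul]

lemma key_interval {v : ℝ → ℝ} {C : ℝ} (hv0 : ∀ t, 0 ≤ v t) (hC : 0 ≤ C)
    (hvC : ∀ t, v t ≤ C) (hvI : Integrable v volume) (n k : ℤ)
    (hH : davg (fun t => (dyadMax v t) ^ 2) n k ≤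
      if dyadSupAbove v n k / 2 ≤ davg v n k then
        (Real.sqrt (davg (fun t => (v t) ^ 2) n k) +
          Real.sqrt (davg (fun t => (v t) ^ 2) n k -
            dyadSupAbove v n k * (2 * davg v n k - dyadSupAbove v n k))) ^ 2
      else 4 * (davg (fun t => (v t) ^ 2) n k - davg v n k ^ 2) + dyadSupAbove v n k ^ 2) :
    ∫ t in dyad n k, (dyadMax v t) ^ 2 ≤
      4 * (∫ t in dyad n k, (v t) ^ 2) + ((2:ℝ)^n)⁻¹ * (∫ t, v t) ^ 2 := by
  have hbnd : ∀ m j : ℤ, davg v m j ≤ C := fun m j => davg_le hC hvC m j hvI.integrableOn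
  have hx1 : 0 ≤ davg v n k := davg_nonneg hv0 n k
  have hx2 : 0 ≤ davg (fun t => (v t) ^ 2) n k := davg_nonneg (fun t => sq_nonneg (v t)) n k
  have hL0 : 0 ≤ dyadSupAbove v n k := dyadSupAbove_nonneg hv0 hbnd n k
  have hLle : dyadSupAbove v n k ≤ ((2:ℝ)^n)⁻¹ * ∫ t, v t := dyadSupAbove_le hv0 hvI n k
  have step1 : davg (fun t => (dyadMax v t) ^ 2) n k ≤
      4 * davg (fun t => (v t) ^ 2) n k + dyadSupAbove v n k ^ 2 :=
    le_trans hH (bellman_le hx1 hx2 hL0)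
  have hL2 : dyadSupAbove v n k ^ 2 ≤ (((2:ℝ)^n)⁻¹ * ∫ t, v t) ^ 2 :=
    pow_le_pow_left₀ hL0 hLle 2
  rw [setIntegral_eq_davg (fun t => (dyadMax v t) ^ 2) n k,
    setIntegral_eq_davg (fun t => (v t) ^ 2) n k]
  have hp := two_zpow_pos n
  have e1 : (2:ℝ)^n * (((2:ℝ)^n)⁻¹ * ∫ t, v t) ^ 2 = ((2:ℝ)^n)⁻¹ * (∫ t, v t) ^ 2 := by
    field_simp
  nlinarith [mul_le_mul_of_nonneg_left step1 hp.le, mul_le_mul_of_nonneg_left hL2 hp.le]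

lemma lint_interval {v : ℝ → ℝ} {C : ℝ} (hv0 : ∀ t, 0 ≤ v t) (hC : 0 ≤ C)
    (hvC : ∀ t, v t ≤ C) (hvI : Integrable v volume) (n k : ℤ)
    (hH : davg (fun t => (dyadMax v t) ^ 2) n k ≤
      if dyadSupAbove v n k / 2 ≤ davg v n k then
        (Real.sqrt (davg (fun t => (v t) ^ 2) n k) +
          Real.sqrt (davg (fun t => (v t) ^ 2) n k -
            dyadSupAbove v n k * (2 * davg v n k - dyadSupAbove v n k))) ^ 2
      else 4 * (davg (fun t => (v t) ^ 2) n k - davg v n k ^ 2) + dyadSupAbove v n k ^ 2) :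
    ∫⁻ t in dyad n k, (EE v t) ^ 2 ∂volume ≤
      ENNReal.ofReal (4 * (∫ t in dyad n k, (v t) ^ 2) + ((2:ℝ)^n)⁻¹ * (∫ t, v t) ^ 2) := by
  have hbnd : ∀ m j : ℤ, davg v m j ≤ C := fun m j => davg_le hC hvC m j hvI.integrableOn
  have hmeas : Measurable (dyadMax v) := measurable_dyadMax hv0 hbnd
  haveI := isFiniteMeasure_restrict n k
  have hint : IntegrableOn (fun t => (dyadMax v t) ^ 2) (dyad n k) volume := by
    refine Integrable.mono' (integrable_const (C ^ 2))
      ((hmeas.pow_const 2).aestronglyMeasurable) ?_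
    filter_upwards with t
    rw [Real.norm_eq_abs, abs_of_nonneg (sq_nonneg _)]
    exact pow_le_pow_left₀ (dyadMax_nonneg hv0 t) (dyadMax_le hC hbnd t) 2
  have heq : ∀ t, (EE v t) ^ 2 = ENNReal.ofReal ((dyadMax v t) ^ 2) := by
    intro t
    rw [EE_eq_ofReal_dyadMax hv0 hbnd, ← ENNReal.ofReal_pow (dyadMax_nonneg hv0 t)]
  calc ∫⁻ t in dyad n k, (EE v t) ^ 2 ∂volume
      = ∫⁻ t in dyad n k, ENNReal.ofReal ((dyadMax v t) ^ 2) ∂volume := by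
        simp_rw [heq]
    _ = ENNReal.ofReal (∫ t in dyad n k, (dyadMax v t) ^ 2) :=
        (ofReal_integral_eq_lintegral_ofReal hint
          (Filter.Eventually.of_forall fun t => sq_nonneg _)).symm
    _ ≤ _ := ENNReal.ofReal_le_ofReal (key_interval hv0 hC hvC hvI n k hH)

lemma lint_two_sided {v : ℝ → ℝ} {C : ℝ} (hv0 : ∀ t, 0 ≤ v t) (hC : 0 ≤ C)
    (hvC : ∀ t, v t ≤ C) (hvI : Integrable v volume)
    (hvI2 : Integrable (fun t => (v t) ^ 2) volume) (n : ℤ)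
    (hH : ∀ k : ℤ, davg (fun t => (dyadMax v t) ^ 2) n k ≤
      if dyadSupAbove v n k / 2 ≤ davg v n k then
        (Real.sqrt (davg (fun t => (v t) ^ 2) n k) +
          Real.sqrt (davg (fun t => (v t) ^ 2) n k -
            dyadSupAbove v n k * (2 * davg v n k - dyadSupAbove v n k))) ^ 2
      else 4 * (davg (fun t => (v t) ^ 2) n k - davg v n k ^ 2) + dyadSupAbove v n k ^ 2) :
    ∫⁻ t in Set.Ico (-(2:ℝ)^n) ((2:ℝ)^n), (EE v t) ^ 2 ∂volume ≤
      ENNReal.ofReal (4 * (∫ t, (v t) ^ 2) + 2 * (((2:ℝ)^n)⁻¹ * (∫ t, v t) ^ 2)) := by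
  have hp := two_zpow_pos n
  have hdneg : dyad n (-1) = Set.Ico (-(2:ℝ)^n) 0 := by
    unfold dyad; norm_num
  have hd0 : dyad n 0 = Set.Ico (0:ℝ) ((2:ℝ)^n) := by
    unfold dyad; norm_num
  have hunion : Set.Ico (-(2:ℝ)^n) ((2:ℝ)^n) = dyad n (-1) ∪ dyad n 0 := by
    rw [hdneg, hd0, Set.Ico_union_Ico_eq_Ico (by linarith) hp.le]
  have hdisj : Disjoint (dyad n (-1)) (dyad n 0) := by
    rw [hdneg, hd0]
    exact Set.Ico_disjoint_Ico_same
  rw [hunion, lintegral_union (measurableSet_dyad n 0) hdisj]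
  have h1 := lint_interval hv0 hC hvC hvI n (-1) (hH (-1))
  have h0 := lint_interval hv0 hC hvC hvI n 0 (hH 0)
  have hsum : (∫ t in dyad n (-1), (v t) ^ 2) + (∫ t in dyad n 0, (v t) ^ 2) ≤
      ∫ t, (v t) ^ 2 := by
    rw [← setIntegral_union hdisj (measurableSet_dyad n 0) hvI2.integrableOn hvI2.integrableOn]
    exact setIntegral_le_integral hvI2 (Filter.Eventually.of_forall fun t => sq_nonneg _)
  have hnn : ∀ k : ℤ, 0 ≤ 4 * (∫ t in dyad n k, (v t) ^ 2) + ((2:ℝ)^n)⁻¹ * (∫ t, v t) ^ 2 := by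
    intro k
    have := integral_nonneg (μ := volume.restrict (dyad n k)) (f := fun t => (v t) ^ 2) (fun t => sq_nonneg (v t))
    positivity
  calc ∫⁻ t in dyad n (-1), (EE v t) ^ 2 ∂volume + ∫⁻ t in dyad n 0, (EE v t) ^ 2 ∂volume
      ≤ ENNReal.ofReal (4 * (∫ t in dyad n (-1), (v t) ^ 2) + ((2:ℝ)^n)⁻¹ * (∫ t, v t) ^ 2)
        + ENNReal.ofReal (4 * (∫ t in dyad n 0, (v t) ^ 2) + ((2:ℝ)^n)⁻¹ * (∫ t, v t) ^ 2) :=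
        add_le_add h1 h0
    _ = ENNReal.ofReal ((4 * (∫ t in dyad n (-1), (v t) ^ 2) + ((2:ℝ)^n)⁻¹ * (∫ t, v t) ^ 2)
        + (4 * (∫ t in dyad n 0, (v t) ^ 2) + ((2:ℝ)^n)⁻¹ * (∫ t, v t) ^ 2)) :=
        (ENNReal.ofReal_add (hnn (-1)) (hnn 0)).symm
    _ ≤ _ := ENNReal.ofReal_le_ofReal (by nlinarith)

lemma lint_global {v : ℝ → ℝ} {C : ℝ} (hv0 : ∀ t, 0 ≤ v t) (hC : 0 ≤ C)
    (hvC : ∀ t, v t ≤ C) (hvI : Integrable v volume)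
    (hvI2 : Integrable (fun t => (v t) ^ 2) volume)
    (hH : ∀ n k : ℤ, davg (fun t => (dyadMax v t) ^ 2) n k ≤
      if dyadSupAbove v n k / 2 ≤ davg v n k then
        (Real.sqrt (davg (fun t => (v t) ^ 2) n k) +
          Real.sqrt (davg (fun t => (v t) ^ 2) n k -
            dyadSupAbove v n k * (2 * davg v n k - dyadSupAbove v n k))) ^ 2
      else 4 * (davg (fun t => (v t) ^ 2) n k - davg v n k ^ 2) + dyadSupAbove v n k ^ 2) :
    ∫⁻ t, (EE v t) ^ 2 ∂volume ≤ ENNReal.ofReal (4 * ∫ t, (v t) ^ 2) := by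
  set A : ℕ → Set ℝ := fun a => Set.Ico (-(2:ℝ)^(a:ℤ)) ((2:ℝ)^(a:ℤ)) with hA
  have hAmono : ∀ a b : ℕ, a ≤ b → A a ⊆ A b := by
    intro a b hab
    have h2 : (2:ℝ)^(a:ℤ) ≤ (2:ℝ)^(b:ℤ) :=
      zpow_le_zpow_right₀ one_le_two (Int.ofNat_le.mpr hab)
    exact Set.Ico_subset_Ico (by linarith) h2
  have hmeasf : Measurable fun t => (EE v t) ^ 2 := (measurable_EE v).pow_const 2
  have stepA : ∀ a : ℕ, ∫⁻ t in A a, (EE v t) ^ 2 ∂volume ≤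
      ENNReal.ofReal (4 * ∫ t, (v t) ^ 2) := by
    intro a
    apply ENNReal.le_of_forall_pos_le_add
    intro ε hε _
    have hεR : (0:ℝ) < (ε:ℝ) := hε
    obtain ⟨M, hM⟩ := pow_unbounded_of_one_lt (2 * (∫ t, v t) ^ 2 / (ε:ℝ)) one_lt_two
    set m : ℕ := max a M with hm
    have h2m : (2:ℝ)^M ≤ (2:ℝ)^m := pow_le_pow_right₀ one_le_two (le_max_right a M)
    have hz : (2:ℝ)^(m:ℤ) = (2:ℝ)^m := zpow_natCast 2 m
    have hpm : (0:ℝ) < 2^m := by positivity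
    have hsmall : 2 * (((2:ℝ)^(m:ℤ))⁻¹ * (∫ t, v t) ^ 2) ≤ (ε:ℝ) := by
      rw [hz, show 2 * (((2:ℝ)^m)⁻¹ * (∫ t, v t) ^ 2)
          = (2 * (∫ t, v t) ^ 2) / 2^m by field_simp, div_le_iff₀ hpm]
      rw [div_lt_iff₀ hεR] at hM
      nlinarith
    calc ∫⁻ t in A a, (EE v t) ^ 2 ∂volume
        ≤ ∫⁻ t in A m, (EE v t) ^ 2 ∂volume :=
          lintegral_mono_set (hAmono a m (le_max_left a M))
      _ ≤ ENNReal.ofReal (4 * (∫ t, (v t) ^ 2)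
            + 2 * (((2:ℝ)^(m:ℤ))⁻¹ * (∫ t, v t) ^ 2)) :=
          lint_two_sided hv0 hC hvC hvI hvI2 (m:ℤ) (fun k => hH (m:ℤ) k)
      _ ≤ ENNReal.ofReal (4 * (∫ t, (v t) ^ 2))
            + ENNReal.ofReal (2 * (((2:ℝ)^(m:ℤ))⁻¹ * (∫ t, v t) ^ 2)) :=
          ENNReal.ofReal_add_le
      _ ≤ ENNReal.ofReal (4 * ∫ t, (v t) ^ 2) + (ε : ℝ≥0∞) := by
          refine add_le_add_right ?_ _
          refine le_trans (ENNReal.ofReal_le_ofReal hsmall) ?_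
          rw [ENNReal.ofReal_coe_nnreal]
  have hcover : ∀ t : ℝ, ∃ a : ℕ, t ∈ A a := by
    intro t
    obtain ⟨a, ha⟩ := exists_nat_gt |t|
    have hc : (a:ℝ) < (2:ℝ)^a := by
      have := Nat.lt_two_pow_self (n := a)
      calc (a:ℝ) < ((2^a : ℕ) : ℝ) := Nat.cast_lt.mpr this
        _ = (2:ℝ)^a := by push_cast; ring
    have habs : |t| < (2:ℝ)^(a:ℤ) := by
      rw [zpow_natCast]
      linarith
    obtain ⟨h1, h2⟩ := abs_lt.mp habs
    exact ⟨a, le_of_lt h1, h2⟩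
  have hround : ∫⁻ t, (EE v t) ^ 2 ∂volume = ⨆ a : ℕ, ∫⁻ t in A a, (EE v t) ^ 2 ∂volume := by
    have h1 : ∀ t, (EE v t) ^ 2 = ⨆ a : ℕ, (A a).indicator (fun s => (EE v s) ^ 2) t := by
      intro t
      refine le_antisymm ?_ (iSup_le fun a => ?_)
      · obtain ⟨a, ha⟩ := hcover t
        exact le_iSup_of_le a
          (le_of_eq (Set.indicator_of_mem ha (fun s => (EE v s) ^ 2)).symm)
      · by_cases ht : t ∈ A a
        · rw [Set.indicator_of_mem ht]
        · rw [Set.indicator_of_notMem ht]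
          exact zero_le
    calc ∫⁻ t, (EE v t) ^ 2 ∂volume
        = ∫⁻ t, ⨆ a : ℕ, (A a).indicator (fun s => (EE v s) ^ 2) t ∂volume :=
          lintegral_congr fun t => h1 t
      _ = ⨆ a : ℕ, ∫⁻ t, (A a).indicator (fun s => (EE v s) ^ 2) t ∂volume := by
          refine lintegral_iSup (fun a => hmeasf.indicator measurableSet_Ico) ?_
          intro a b hab t
          exact Set.indicator_le_indicator_of_subset (hAmono a b hab) (fun _ => zero_le) t
      _ = ⨆ a : ℕ, ∫⁻ t in A a, (EE v t) ^ 2 ∂volume := by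
          exact iSup_congr fun a => lintegral_indicator measurableSet_Ico _
  rw [hround]
  exact iSup_le stepA

lemma davg_trunc_tendsto {w : ℝ → ℝ} (hw0 : ∀ t, 0 ≤ w t) (hw2 : MemLp w 2 volume)
    (n k : ℤ) :
    Filter.Tendsto (fun N => davg (trunc w N) n k) Filter.atTop (nhds (davg w n k)) := by
  haveI := isFiniteMeasure_restrict n k
  have hwint : Integrable w (volume.restrict (dyad n k)) :=
    (hw2.restrict _).integrable one_le_two
  have h := integral_tendsto_of_tendsto_of_monotone
    (f := fun N => trunc w N) (F := w) (μ := volume.restrict (dyad n k))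
    (fun N => (trunc_integrable hw0 hw2.aestronglyMeasurable N).restrict)
    hwint
    (Filter.Eventually.of_forall fun t => trunc_mono hw0 t)
    (Filter.Eventually.of_forall fun t => trunc_tendsto hw0 t)
  exact h.const_mul _

lemma davg_trunc_mono {w : ℝ → ℝ} (hw0 : ∀ t, 0 ≤ w t)
    (hsm : AEStronglyMeasurable w volume) {a b : ℕ} (hab : a ≤ b) (n k : ℤ) :
    davg (trunc w a) n k ≤ davg (trunc w b) n k := by
  apply mul_le_mul_of_nonneg_left _ (inv_nonneg.mpr (two_zpow_pos n).le)
  exact integral_mono (trunc_integrable hw0 hsm a).restrict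
    (trunc_integrable hw0 hsm b).restrict (fun t => trunc_mono hw0 t hab)

lemma EE_trunc_mono {w : ℝ → ℝ} (hw0 : ∀ t, 0 ≤ w t)
    (hsm : AEStronglyMeasurable w volume) {a b : ℕ} (hab : a ≤ b) (t : ℝ) :
    EE (trunc w a) t ≤ EE (trunc w b) t := by
  apply iSup_mono
  intro p
  by_cases ht : t ∈ dyad p.1 p.2
  · rw [Set.indicator_of_mem ht, Set.indicator_of_mem ht]
    exact ENNReal.ofReal_le_ofReal (davg_trunc_mono hw0 hsm hab p.1 p.2)
  · rw [Set.indicator_of_notMem ht]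
    exact zero_le

lemma sq_iSup_monotone {u : ℕ → ℝ≥0∞} (hu : Monotone u) :
    (⨆ i, u i) ^ 2 = ⨆ i, (u i) ^ 2 := by
  rw [sq, ENNReal.iSup_mul]
  simp_rw [ENNReal.mul_iSup]
  refine le_antisymm (iSup_le fun i => iSup_le fun j => ?_) (iSup_le fun i => ?_)
  · refine le_iSup_of_le (max i j) ?_
    rw [sq]
    exact mul_le_mul' (hu (le_max_left i j)) (hu (le_max_right i j))
  · refine le_iSup_of_le i (le_iSup_of_le i ?_)
    rw [sq]

lemma EE_le_iSup_trunc {w : ℝ → ℝ} (hw0 : ∀ t, 0 ≤ w t) (hw2 : MemLp w 2 volume) (t : ℝ) :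
    EE w t ≤ ⨆ N : ℕ, EE (trunc w N) t := by
  apply iSup_le
  intro p
  by_cases ht : t ∈ dyad p.1 p.2
  · rw [Set.indicator_of_mem ht]
    have htend : Filter.Tendsto (fun N => ENNReal.ofReal (davg (trunc w N) p.1 p.2))
        Filter.atTop (nhds (ENNReal.ofReal (davg w p.1 p.2))) :=
      ENNReal.tendsto_ofReal (davg_trunc_tendsto hw0 hw2 p.1 p.2)
    refine le_of_tendsto' htend (fun N => ?_)
    exact le_trans (le_EE ht) (le_iSup (fun N => EE (trunc w N) t) N)
  · rw [Set.indicator_of_notMem ht]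
    exact zero_le


theorem maximal_L2_bound
    (H : ∀ w : ℝ → ℝ, (∀ t, 0 ≤ w t) → MemLp w 2 volume → ∀ n k : ℤ,
      let x₁ : ℝ := davg w n k
      let x₂ : ℝ := davg (fun t => (w t) ^ 2) n k
      let L : ℝ := dyadSupAbove w n k
      davg (fun t => (dyadMax w t) ^ 2) n k ≤
        if L / 2 ≤ x₁ then
          (Real.sqrt x₂ + Real.sqrt (x₂ - L * (2 * x₁ - L))) ^ 2
        else 4 * (x₂ - x₁ ^ 2) + L ^ 2) :
    ∀ w : ℝ → ℝ, (∀ t, 0 ≤ w t) → MemLp w 2 volume →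
      eLpNorm (dyadMax w) 2 volume ≤ 2 * eLpNorm w 2 volume := by
  intro w hw0 hw2
  have hsm := hw2.aestronglyMeasurable
  -- quantities
  set v : ℕ → ℝ → ℝ := fun N => trunc w N with hv
  have hv0 : ∀ N t, 0 ≤ v N t := fun N t => trunc_nonneg hw0 N t
  have hvC : ∀ N t, v N t ≤ (N:ℝ) := fun N t => trunc_le_nat N t
  have hvI : ∀ N, Integrable (v N) volume := fun N => trunc_integrable hw0 hsm N
  have hvI2 : ∀ N, Integrable (fun t => (v N t) ^ 2) volume :=
    fun N => trunc_sq_integrable hw0 hsm N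
  have hv2 : ∀ N, MemLp (v N) 2 volume := fun N => trunc_memLp hw0 hw2 N
  have hHv : ∀ N : ℕ, ∀ n k : ℤ, davg (fun t => (dyadMax (v N) t) ^ 2) n k ≤
      if dyadSupAbove (v N) n k / 2 ≤ davg (v N) n k then
        (Real.sqrt (davg (fun t => (v N t) ^ 2) n k) +
          Real.sqrt (davg (fun t => (v N t) ^ 2) n k -
            dyadSupAbove (v N) n k * (2 * davg (v N) n k - dyadSupAbove (v N) n k))) ^ 2
      else 4 * (davg (fun t => (v N t) ^ 2) n k - davg (v N) n k ^ 2)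
        + dyadSupAbove (v N) n k ^ 2 :=
    fun N n k => H (v N) (hv0 N) (hv2 N) n k
  have glob : ∀ N : ℕ, ∫⁻ t, (EE (v N) t) ^ 2 ∂volume ≤
      ENNReal.ofReal (4 * ∫ t, (v N t) ^ 2) :=
    fun N => lint_global (hv0 N) (Nat.cast_nonneg N) (hvC N) (hvI N) (hvI2 N) (hHv N)
  have hNle : ∀ N : ℕ, ENNReal.ofReal (4 * ∫ t, (v N t) ^ 2) ≤
      4 * ∫⁻ t, ((‖w t‖₊ : ℝ≥0∞)) ^ 2 ∂volume := by
    intro N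
    rw [ENNReal.ofReal_mul (by norm_num : (0:ℝ) ≤ 4)]
    rw [ofReal_integral_eq_lintegral_ofReal (hvI2 N)
      (Filter.Eventually.of_forall fun t => sq_nonneg _)]
    have h4 : ENNReal.ofReal (4:ℝ) = (4:ℝ≥0∞) := by norm_num
    rw [h4]
    refine mul_le_mul_right (lintegral_mono fun t => ?_) _
    have he : ((‖w t‖₊ : ℝ≥0∞)) ^ 2 = ENNReal.ofReal ((w t) ^ 2) := by
      rw [← enorm_eq_nnnorm, Real.enorm_eq_ofReal (hw0 t), ← ENNReal.ofReal_pow (hw0 t)]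
    rw [he]
    exact ENNReal.ofReal_le_ofReal
      (pow_le_pow_left₀ (hv0 N t) (trunc_le_self hw0 N t) 2)
  -- pointwise comparison
  have hpt : ∀ t, ((‖dyadMax w t‖₊ : ℝ≥0∞)) ^ 2 ≤ ⨆ N : ℕ, (EE (v N) t) ^ 2 := by
    intro t
    have ha : ((‖dyadMax w t‖₊ : ℝ≥0∞)) = ENNReal.ofReal (dyadMax w t) :=
      Real.enorm_eq_ofReal (dyadMax_nonneg hw0 t)
    rw [ha]
    have h1 : ENNReal.ofReal (dyadMax w t) ≤ ⨆ N : ℕ, EE (v N) t :=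
      le_trans (ofReal_dyadMax_le_EE hw0 t) (EE_le_iSup_trunc hw0 hw2 t)
    calc ENNReal.ofReal (dyadMax w t) ^ 2 ≤ (⨆ N : ℕ, EE (v N) t) ^ 2 :=
          pow_le_pow_left' h1 2
      _ = ⨆ N : ℕ, (EE (v N) t) ^ 2 :=
          sq_iSup_monotone (fun a b hab => EE_trunc_mono hw0 hsm hab t)
  have main : ∫⁻ t, ((‖dyadMax w t‖₊ : ℝ≥0∞)) ^ 2 ∂volume ≤
      4 * ∫⁻ t, ((‖w t‖₊ : ℝ≥0∞)) ^ 2 ∂volume := by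
    calc ∫⁻ t, ((‖dyadMax w t‖₊ : ℝ≥0∞)) ^ 2 ∂volume
        ≤ ∫⁻ t, ⨆ N : ℕ, (EE (v N) t) ^ 2 ∂volume := lintegral_mono hpt
      _ = ⨆ N : ℕ, ∫⁻ t, (EE (v N) t) ^ 2 ∂volume := by
          refine lintegral_iSup (fun N => (measurable_EE (v N)).pow_const 2) ?_
          intro a b hab t
          exact pow_le_pow_left' (EE_trunc_mono hw0 hsm hab t) 2
      _ ≤ 4 * ∫⁻ t, ((‖w t‖₊ : ℝ≥0∞)) ^ 2 ∂volume :=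
          iSup_le fun N => le_trans (glob N) (hNle N)
  -- conclude via eLpNorm
  rw [eLpNorm_eq_lintegral_rpow_enorm_toReal (by norm_num : (2:ℝ≥0∞) ≠ 0) ENNReal.ofNat_ne_top,
    eLpNorm_eq_lintegral_rpow_enorm_toReal (by norm_num : (2:ℝ≥0∞) ≠ 0) ENNReal.ofNat_ne_top]
  have htr : (2:ℝ≥0∞).toReal = 2 := by norm_num
  rw [htr]
  have hconv : ∀ x : ℝ≥0∞, x ^ (2:ℝ) = x ^ (2:ℕ) := fun x => by
    rw [← ENNReal.rpow_natCast]
    norm_num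
  simp_rw [hconv]
  calc (∫⁻ t, ((‖dyadMax w t‖₊ : ℝ≥0∞)) ^ (2:ℕ) ∂volume) ^ (1/2 : ℝ)
      ≤ (4 * ∫⁻ t, ((‖w t‖₊ : ℝ≥0∞)) ^ (2:ℕ) ∂volume) ^ (1/2 : ℝ) :=
        ENNReal.rpow_le_rpow main (by norm_num)
    _ = (4:ℝ≥0∞) ^ (1/2:ℝ) * (∫⁻ t, ((‖w t‖₊ : ℝ≥0∞)) ^ (2:ℕ) ∂volume) ^ (1/2:ℝ) :=
        ENNReal.mul_rpow_of_nonneg _ _ (by norm_num)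
    _ = 2 * (∫⁻ t, ((‖w t‖₊ : ℝ≥0∞)) ^ (2:ℕ) ∂volume) ^ (1/2:ℝ) := by
        congr 1
        rw [show (4:ℝ≥0∞) = (2:ℝ≥0∞) ^ (2:ℕ) by norm_num, ← ENNReal.rpow_natCast,
          ← ENNReal.rpow_mul]
        norm_num
end
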